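/- arXiv:2005.08898 — 8 statements merged into one kernel-verified Lean document; each statement's English description precedes it below -/
import Mathlib

section
/- For vectors u, u_star in R^n with u ≠ 0, and any scalar λ ≥ ‖u_star‖₂/‖u‖₂, it holds that ‖(min(1,λ))·u − u_star‖₂ ≤ ‖u − u_star‖₂. -/
/-!
Expanding the squares, `‖x - y‖² - ‖t • x - y‖² = (1 - t) ((1 + t) ‖x‖² - 2 ⟪x, y⟫)`, and
Cauchy–Schwarz with `‖y‖ ≤ t ‖x‖` bounds the second factor below by `(1 - t) ‖x‖² ≥ 0`.
Shrinking `u` by `λ < 1` therefore does not move it away from `u⋆` once `‖u⋆‖ ≤ λ ‖u‖`.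
-/

section

variable {E : Type*} [NormedAddCommGroup E] [InnerProductSpace ℝ E]

theorem norm_smul_sub_le_norm_sub_of_norm_le_mul {x y : E} {t : ℝ} (ht : t ≤ 1)
    (hy : ‖y‖ ≤ t * ‖x‖) : ‖t • x - y‖ ≤ ‖x - y‖ := by
  have hinner : inner ℝ x y ≤ t * ‖x‖ ^ 2 :=
    calc inner ℝ x y ≤ ‖x‖ * ‖y‖ := real_inner_le_norm x y
      _ ≤ ‖x‖ * (t * ‖x‖) := mul_le_mul_of_nonneg_left hy (norm_nonneg x)
      _ = t * ‖x‖ ^ 2 := by ring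
  have hsq : ‖t • x - y‖ ^ 2 ≤ ‖x - y‖ ^ 2 := by
    rw [norm_sub_sq_real, norm_sub_sq_real, real_inner_smul_left, norm_smul, mul_pow,
      Real.norm_eq_abs, sq_abs]
    nlinarith [mul_nonneg (sub_nonneg.2 ht) (sub_nonneg.2 hinner),
      mul_nonneg (mul_nonneg (sub_nonneg.2 ht) (sub_nonneg.2 ht)) (sq_nonneg ‖x‖)]
  exact (sq_le_sq₀ (norm_nonneg _) (norm_nonneg _)).1 hsq

end

theorem euclidean_clip_nonexpansive {n : ℕ} (u ustar : EuclideanSpace ℝ (Fin n))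
    (hu : u ≠ 0) (lam : ℝ) (hlam : ‖ustar‖ / ‖u‖ ≤ lam) :
    ‖(min 1 lam) • u - ustar‖ ≤ ‖u - ustar‖ := by
  rcases le_or_gt 1 lam with hge | hlt
  · rw [min_eq_left hge, one_smul]
  · rw [min_eq_right hlt.le]
    exact norm_smul_sub_le_norm_sub_of_norm_le_mul hlt.le
      ((div_le_iff₀ (norm_pos_iff.2 hu)).1 hlam)
end

section
/- For any real n₁×n₂ matrix X and any integer r with 1 ≤ r ≤ min(n₁,n₂), the partial Frobenius norm ‖X‖_{F,r} := sqrt(Σ_{i=1}^r σ_i(X)²) equals the maximum of |⟨X, Y⟩| over all n₁×n₂ matrices Y with ‖Y‖_F ≤ 1 and rank(Y) ≤ r, where ⟨X,Y⟩ = trace(X^T Y). -/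
open Matrix

/-- Frobenius norm of a real matrix. -/
noncomputable def frob {n₁ n₂ : ℕ} (A : Matrix (Fin n₁) (Fin n₂) ℝ) : ℝ :=
  Real.sqrt (∑ i, ∑ j, (A i j) ^ 2)

/-- `IsSVD X U σ V` says that `X = U * diag σ * Vᵀ` is a singular value decomposition of `X`:
`U` and `V` have orthonormal columns and the singular values `σ` are nonnegative and sorted
in nonincreasing order. -/
def IsSVD {n₁ n₂ k : ℕ} (X : Matrix (Fin n₁) (Fin n₂) ℝ)
    (U : Matrix (Fin n₁) (Fin k) ℝ) (σ : Fin k → ℝ) (V : Matrix (Fin n₂) (Fin k) ℝ) : Prop :=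
  X = U * Matrix.diagonal σ * Vᵀ ∧ Uᵀ * U = 1 ∧ Vᵀ * V = 1 ∧ Antitone σ ∧ ∀ i, 0 ≤ σ i

/-!
Write `X = U Σ Vᵀ`. If `rank Y ≤ r`, then `Y = E Eᵀ Y` where `E` has `d ≤ r` orthonormal
columns spanning the column space of `Y`, so `⟨X, Y⟩ = ⟨Eᵀ X, Eᵀ Y⟩ ≤ ‖Eᵀ X‖_F ‖Y‖_F`.
Moreover `‖Eᵀ X‖_F² = ∑ σ_i² t_i` with `t_i = ‖Eᵀ u_i‖² ∈ [0, 1]` and `∑ t_i ≤ d ≤ r`, and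
because `σ` is nonincreasing such a weighted sum is at most `∑_{i<r} σ_i²`. Equality is attained
by `Y = U diag(σ_1, …, σ_r, 0, …, 0) Vᵀ / ‖X‖_{F,r}`.
-/

open Finset

theorem sum_mul_le_sum_of_threshold {ι : Type*} [DecidableEq ι] {s S : Finset ι} (hS : S ⊆ s)
    {a t : ι → ℝ} {c : ℝ} (hc : 0 ≤ c) (ha_in : ∀ i ∈ S, c ≤ a i)
    (ha_out : ∀ i ∈ s \ S, a i ≤ c) (ht0 : ∀ i ∈ s, 0 ≤ t i) (ht1 : ∀ i ∈ S, t i ≤ 1)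
    (hts : ∑ i ∈ s, t i ≤ #S) :
    ∑ i ∈ s, a i * t i ≤ ∑ i ∈ S, a i := by
  have hin : ∑ i ∈ S, (a i - c) * (t i - 1) ≤ 0 :=
    sum_nonpos fun i hi => mul_nonpos_of_nonneg_of_nonpos (by linarith [ha_in i hi])
      (by linarith [ht1 i hi])
  have hout : ∑ i ∈ s \ S, (a i - c) * t i ≤ 0 :=
    sum_nonpos fun i hi => mul_nonpos_of_nonpos_of_nonneg (by linarith [ha_out i hi])
      (ht0 i (sdiff_subset hi))
  have hsplit : ∑ i ∈ s, a i * t i - ∑ i ∈ S, a i = ∑ i ∈ S, (a i - c) * (t i - 1)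
      + ∑ i ∈ s \ S, (a i - c) * t i + c * (∑ i ∈ s, t i - #S) := by
    rw [← sum_sdiff hS, ← sum_sdiff hS (f := t)]
    simp only [sub_mul, mul_sub, sum_sub_distrib, ← mul_sum, mul_one, sum_const, nsmul_eq_mul]
    ring
  nlinarith

theorem mem_map_castLEEmb_univ {k r : ℕ} (hr : r ≤ k) (i : Fin k) :
    i ∈ univ.map (Fin.castLEEmb hr) ↔ (i : ℕ) < r :=
  ⟨fun h => by obtain ⟨j, -, rfl⟩ := mem_map.1 h; exact j.isLt,
    fun h => mem_map.2 ⟨⟨i, h⟩, mem_univ _, rfl⟩⟩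

theorem sum_mul_le_sum_castLE {k r : ℕ} (hr : r ≤ k) {a t : Fin k → ℝ} (ha : Antitone a)
    (ha0 : ∀ i, 0 ≤ a i) (ht0 : ∀ i, 0 ≤ t i) (ht1 : ∀ i, t i ≤ 1) (hts : ∑ i, t i ≤ r) :
    ∑ i, a i * t i ≤ ∑ i : Fin r, a (Fin.castLE hr i) := by
  rw [show ∑ i : Fin r, a (Fin.castLE hr i) = ∑ i ∈ univ.map (Fin.castLEEmb hr), a i from
    (sum_map univ (Fin.castLEEmb hr) a).symm]
  have hcard : (#(univ.map (Fin.castLEEmb hr)) : ℝ) = r := by simp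
  by_cases hrk : r < k
  · refine sum_mul_le_sum_of_threshold (subset_univ _) (ha0 ⟨r, hrk⟩) (fun i hi => ha ?_)
      (fun i hi => ha ?_) (fun i _ => ht0 i) (fun i _ => ht1 i) (hcard ▸ hts)
    · exact Fin.le_iff_val_le_val.2 ((mem_map_castLEEmb_univ hr i).1 hi).le
    · rw [mem_sdiff, mem_map_castLEEmb_univ] at hi
      exact Fin.le_iff_val_le_val.2 (not_lt.1 hi.2)
  · refine sum_mul_le_sum_of_threshold (subset_univ _) le_rfl (fun i _ => ha0 i) ?_
      (fun i _ => ht0 i) (fun i _ => ht1 i) (hcard ▸ hts)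
    intro i hi
    rw [mem_sdiff, mem_map_castLEEmb_univ] at hi
    exact absurd (i.isLt.trans_le (not_lt.1 hrk)) hi.2

section OrthonormalColumns

variable {m n k l R : Type*} [Fintype m] [Fintype k] [DecidableEq k] [CommRing R]

theorem trace_transpose_mul_eq_sum [Fintype n] (A B : Matrix m n R) :
    trace (Aᵀ * B) = ∑ i, ∑ j, A i j * B i j := by
  simp only [trace, Matrix.diag, mul_apply, transpose_apply]
  exact sum_comm

theorem trace_transpose_mul_mul_transpose [Fintype n] {V : Matrix n k R} (hV : Vᵀ * V = 1)
    (A B : Matrix m k R) : trace ((A * Vᵀ)ᵀ * (B * Vᵀ)) = trace (Aᵀ * B) := by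
  rw [transpose_mul, transpose_transpose, Matrix.mul_assoc, trace_mul_comm, ← Matrix.mul_assoc,
    Matrix.mul_assoc (Aᵀ * B), hV, Matrix.mul_one]

theorem trace_transpose_mul_diagonal_mul_mul_diagonal (G : Matrix m k R) (a b : k → R) :
    trace ((G * diagonal a)ᵀ * (G * diagonal b)) = ∑ i, a i * b i * (Gᵀ * G) i i := by
  rw [transpose_mul, diagonal_transpose, Matrix.mul_assoc, ← Matrix.mul_assoc Gᵀ]
  simp only [trace, Matrix.diag, diagonal_mul, mul_diagonal]
  exact sum_congr rfl fun i _ => by ring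

theorem trace_transpose_svd_mul_svd [Fintype n] {U : Matrix m k R} {V : Matrix n k R}
    (hU : Uᵀ * U = 1) (hV : Vᵀ * V = 1) (a b : k → R) :
    trace ((U * diagonal a * Vᵀ)ᵀ * (U * diagonal b * Vᵀ)) = ∑ i, a i * b i := by
  simp only [trace_transpose_mul_mul_transpose hV, trace_transpose_mul_diagonal_mul_mul_diagonal,
    hU, one_apply_eq, mul_one]

-- Pythagoras for the orthogonal projection `E * Eᵀ`.
theorem transpose_mul_self_eq_add {E : Matrix m k R} (hE : Eᵀ * E = 1) (A : Matrix m n R) :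
    Aᵀ * A = (Eᵀ * A)ᵀ * (Eᵀ * A) + (A - E * (Eᵀ * A))ᵀ * (A - E * (Eᵀ * A)) := by
  simp only [transpose_sub, transpose_mul, transpose_transpose, Matrix.mul_sub, Matrix.sub_mul,
    Matrix.mul_assoc]
  rw [← Matrix.mul_assoc Eᵀ E, hE, Matrix.one_mul]
  abel

variable [LinearOrder R] [IsStrictOrderedRing R]

theorem diag_transpose_mul_self_nonneg (A : Matrix m n R) (j : n) : 0 ≤ (Aᵀ * A) j j := by
  simp only [mul_apply, transpose_apply]
  exact sum_nonneg fun i _ => mul_self_nonneg _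

theorem diag_transpose_mul_le {E : Matrix m k R} (hE : Eᵀ * E = 1) (A : Matrix m n R) (j : n) :
    ((Eᵀ * A)ᵀ * (Eᵀ * A)) j j ≤ (Aᵀ * A) j j := by
  rw [transpose_mul_self_eq_add hE A, Matrix.add_apply]
  exact le_add_of_nonneg_right (diag_transpose_mul_self_nonneg _ j)

theorem trace_transpose_mul_self_le_card [Fintype l] [DecidableEq l] {E : Matrix m k R}
    {U : Matrix m l R} (hE : Eᵀ * E = 1) (hU : Uᵀ * U = 1) :
    trace ((Eᵀ * U)ᵀ * (Eᵀ * U)) ≤ Fintype.card k := by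
  have hswap : trace ((Eᵀ * U)ᵀ * (Eᵀ * U)) = trace ((Uᵀ * E)ᵀ * (Uᵀ * E)) := by
    rw [trace_mul_comm, transpose_mul, transpose_transpose, transpose_mul, transpose_transpose]
  calc trace ((Eᵀ * U)ᵀ * (Eᵀ * U)) = ∑ i, ((Uᵀ * E)ᵀ * (Uᵀ * E)) i i := hswap
    _ ≤ ∑ i, (Eᵀ * E) i i :=
      sum_le_sum fun i _ => diag_transpose_mul_le hU E i
    _ = Fintype.card k := by simp [hE]

end OrthonormalColumns

theorem exists_orthonormal_cols_mul_transpose_mul_eq_of_rank_le {m n : Type*} [Fintype m]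
    [Fintype n] [DecidableEq n] (Y : Matrix m n ℝ) {r : ℕ} (hY : Y.rank ≤ r) :
    ∃ d ≤ r, ∃ E : Matrix m (Fin d) ℝ, Eᵀ * E = 1 ∧ E * (Eᵀ * Y) = Y := by
  let W := LinearMap.range (toEuclideanLin Y)
  have hW : Y.rank = Module.finrank ℝ W := by
    rw [rank_eq_finrank_range_toLin Y (EuclideanSpace.basisFun m ℝ).toBasis
      (EuclideanSpace.basisFun n ℝ).toBasis, ← toEuclideanLin_eq_toLin_orthonormal]
  let b := stdOrthonormalBasis ℝ W
  let E : Matrix m (Fin (Module.finrank ℝ W)) ℝ := of fun i l => (b l : EuclideanSpace ℝ m) i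
  have hEt (w : EuclideanSpace ℝ m) (l) :
      (Eᵀ *ᵥ w.ofLp) l = inner ℝ (b l : EuclideanSpace ℝ m) w := by
    simp only [E, mulVec, dotProduct, EuclideanSpace.inner_eq_star_dotProduct, transpose_apply,
      of_apply, star_trivial]
    exact sum_congr rfl fun _ _ => mul_comm _ _
  refine ⟨_, hW ▸ hY, E, ?_, ?_⟩
  · ext l l'
    have := orthonormal_iff_ite.mp b.orthonormal l l'
    rw [Submodule.coe_inner, EuclideanSpace.inner_eq_star_dotProduct] at this
    simp only [mul_apply, transpose_apply, one_apply, E, of_apply]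
    rw [← this]
    simp only [dotProduct, star_trivial]
    exact sum_congr rfl fun _ _ => mul_comm _ _
  · apply mulVec_injective
    funext x
    rw [← mulVec_mulVec, ← mulVec_mulVec]
    have := congrArg (fun w : W => (w : EuclideanSpace ℝ m).ofLp)
      (b.sum_repr' ⟨WithLp.toLp 2 (Y *ᵥ x), WithLp.toLp 2 x, rfl⟩)
    simp only [Submodule.coe_sum, Submodule.coe_smul, Submodule.coe_inner, WithLp.ofLp_sum,
      WithLp.ofLp_smul, ← hEt] at this
    generalize Eᵀ *ᵥ Y *ᵥ x = c at this ⊢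
    rw [← this]
    ext i
    simp only [mulVec, dotProduct, E, of_apply, Finset.sum_apply, Pi.smul_apply, smul_eq_mul]
    exact sum_congr rfl fun _ _ => mul_comm _ _

theorem frob_eq_sqrt_trace {n₁ n₂ : ℕ} (A : Matrix (Fin n₁) (Fin n₂) ℝ) :
    frob A = √(trace (Aᵀ * A)) := by
  simp only [frob, trace_transpose_mul_eq_sum, sq]

theorem abs_trace_transpose_mul_le_frob_mul_frob {n₁ n₂ : ℕ}
    (A B : Matrix (Fin n₁) (Fin n₂) ℝ) :
    |trace (Aᵀ * B)| ≤ frob A * frob B := by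
  have cs (A : Matrix (Fin n₁) (Fin n₂) ℝ) : trace (Aᵀ * B) ≤ frob A * frob B := by
    simpa only [trace_transpose_mul_eq_sum, frob, Fintype.sum_prod_type] using
      Real.sum_mul_le_sqrt_mul_sqrt univ (fun p : Fin n₁ × Fin n₂ => A p.1 p.2)
        (fun p => B p.1 p.2)
  have hneg : frob (-A) = frob A := by simp only [frob, Matrix.neg_apply, neg_sq]
  refine abs_le.2 ⟨?_, cs A⟩
  have := cs (-A)
  rw [hneg, transpose_neg, Matrix.neg_mul, trace_neg] at this
  linarith

namespace IsSVD

variable {n₁ n₂ k r : ℕ} {X : Matrix (Fin n₁) (Fin n₂) ℝ} {U : Matrix (Fin n₁) (Fin k) ℝ}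
  {σ : Fin k → ℝ} {V : Matrix (Fin n₂) (Fin k) ℝ}

theorem frob_transpose_mul_le (h : IsSVD X U σ V) {d : ℕ} {E : Matrix (Fin n₁) (Fin d) ℝ}
    (hE : Eᵀ * E = 1) (hd : d ≤ r) (hr : r ≤ k) :
    frob (Eᵀ * X) ≤ √(∑ i : Fin r, σ (Fin.castLE hr i) ^ 2) := by
  obtain ⟨rfl, hU, hV, hanti, hpos⟩ := h
  rw [frob_eq_sqrt_trace]
  refine Real.sqrt_le_sqrt ?_
  set G := Eᵀ * U
  rw [show Eᵀ * (U * diagonal σ * Vᵀ) = G * diagonal σ * Vᵀ by simp only [G, Matrix.mul_assoc],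
    trace_transpose_mul_mul_transpose hV, trace_transpose_mul_diagonal_mul_mul_diagonal]
  simp only [← sq]
  refine sum_mul_le_sum_castLE hr (fun i j hij => pow_le_pow_left₀ (hpos j) (hanti hij) 2)
    (fun i => sq_nonneg _) (diag_transpose_mul_self_nonneg G) (fun i => ?_) ?_
  · simpa only [hU, one_apply_eq] using diag_transpose_mul_le hE U i
  · calc ∑ i, (Gᵀ * G) i i = trace (Gᵀ * G) := rfl
      _ ≤ d := (trace_transpose_mul_self_le_card hE hU).trans_eq (by rw [Fintype.card_fin])
      _ ≤ r := by exact_mod_cast hd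

theorem abs_trace_transpose_mul_le (h : IsSVD X U σ V) {Y : Matrix (Fin n₁) (Fin n₂) ℝ}
    (hY : Y.rank ≤ r) (hr : r ≤ k) :
    |trace (Xᵀ * Y)| ≤ √(∑ i : Fin r, σ (Fin.castLE hr i) ^ 2) * frob Y := by
  obtain ⟨d, hd, E, hE, hEY⟩ := exists_orthonormal_cols_mul_transpose_mul_eq_of_rank_le Y hY
  have hframe (A : Matrix (Fin n₁) (Fin n₂) ℝ) :
      trace ((Eᵀ * A)ᵀ * (Eᵀ * Y)) = trace (Aᵀ * Y) := by
    rw [transpose_mul, transpose_transpose, Matrix.mul_assoc, hEY]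
  have hfrobY : frob (Eᵀ * Y) = frob Y := by rw [frob_eq_sqrt_trace, frob_eq_sqrt_trace, hframe]
  calc |trace (Xᵀ * Y)| = |trace ((Eᵀ * X)ᵀ * (Eᵀ * Y))| := by rw [hframe]
    _ ≤ frob (Eᵀ * X) * frob (Eᵀ * Y) := abs_trace_transpose_mul_le_frob_mul_frob _ _
    _ ≤ √(∑ i : Fin r, σ (Fin.castLE hr i) ^ 2) * frob Y := by
      rw [hfrobY]
      exact mul_le_mul_of_nonneg_right (h.frob_transpose_mul_le hE hd hr) (Real.sqrt_nonneg _)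

end IsSVD

theorem exists_frob_le_one_rank_le_trace_eq {n₁ n₂ k r : ℕ} {U : Matrix (Fin n₁) (Fin k) ℝ}
    {V : Matrix (Fin n₂) (Fin k) ℝ} (hU : Uᵀ * U = 1) (hV : Vᵀ * V = 1) (σ : Fin k → ℝ)
    (hr : r ≤ k) :
    ∃ Y : Matrix (Fin n₁) (Fin n₂) ℝ, frob Y ≤ 1 ∧ Y.rank ≤ r ∧
      trace ((U * diagonal σ * Vᵀ)ᵀ * Y) = √(∑ i : Fin r, σ (Fin.castLE hr i) ^ 2) := by
  set S := univ.map (Fin.castLEEmb hr)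
  set s := √(∑ i : Fin r, σ (Fin.castLE hr i) ^ 2)
  have hS : ∑ i ∈ S, σ i ^ 2 = s ^ 2 := by
    rw [Real.sq_sqrt (sum_nonneg fun _ _ => sq_nonneg _)]
    exact sum_map univ (Fin.castLEEmb hr) (σ · ^ 2)
  -- if `s = 0` then `τ = 0` (as `x / 0 = 0`), and the three claims below still hold
  let τ : Fin k → ℝ := fun i => if i ∈ S then σ i / s else 0
  have hsum (a : Fin k → ℝ) : ∑ i, a i * τ i = ∑ i ∈ S, a i * σ i / s := by
    simp only [τ, mul_ite, mul_zero, sum_ite_mem, univ_inter, mul_div_assoc]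
  have hτ : ∀ i ∈ S, τ i = σ i / s := fun i hi => if_pos hi
  refine ⟨U * diagonal τ * Vᵀ, ?_, ?_, ?_⟩
  · rw [frob_eq_sqrt_trace, trace_transpose_svd_mul_svd hU hV, hsum]
    refine Real.sqrt_le_one.2 ?_
    calc ∑ i ∈ S, τ i * σ i / s = (∑ i ∈ S, σ i ^ 2) / s ^ 2 := by
          rw [sum_div]
          exact sum_congr rfl fun i hi => by rw [hτ i hi]; ring
      _ ≤ 1 := hS ▸ div_self_le_one _
  · calc (U * diagonal τ * Vᵀ).rank ≤ (diagonal τ).rank :=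
          (rank_mul_le_left _ _).trans (rank_mul_le_right _ _)
      _ = Fintype.card {i // τ i ≠ 0} := rank_diagonal τ
      _ ≤ #S := by
          rw [Fintype.card_subtype]
          exact card_le_card fun i hi => by_contra fun h => (mem_filter.1 hi).2 (if_neg h)
      _ = r := by simp [S]
  · rw [trace_transpose_svd_mul_svd hU hV, hsum, ← sum_div]
    simp only [← sq]
    rw [hS, sq, mul_self_div_self]

theorem partialFro_eq_max_inner_general {n₁ n₂ r : ℕ}
    (X : Matrix (Fin n₁) (Fin n₂) ℝ)
    (U : Matrix (Fin n₁) (Fin (min n₁ n₂)) ℝ) (σ : Fin (min n₁ n₂) → ℝ)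
    (V : Matrix (Fin n₂) (Fin (min n₁ n₂)) ℝ)
    (hSVD : IsSVD X U σ V) (hr : r ≤ min n₁ n₂) :
    IsGreatest {c : ℝ | ∃ Y : Matrix (Fin n₁) (Fin n₂) ℝ,
        frob Y ≤ 1 ∧ Y.rank ≤ r ∧ c = |Matrix.trace (Xᵀ * Y)|}
      (Real.sqrt (∑ i : Fin r, (σ (Fin.castLE hr i)) ^ 2)) := by
  refine ⟨?_, ?_⟩
  · obtain ⟨hX, hU, hV, -⟩ := hSVD
    obtain ⟨Y, hY1, hYr, hXY⟩ := exists_frob_le_one_rank_le_trace_eq hU hV σ hr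
    exact ⟨Y, hY1, hYr, by rw [hX, hXY, abs_of_nonneg (Real.sqrt_nonneg _)]⟩
  · rintro c ⟨Y, hY1, hYr, rfl⟩
    exact (hSVD.abs_trace_transpose_mul_le hYr hr).trans
      (mul_le_of_le_one_right (Real.sqrt_nonneg _) hY1)

/-- The partial Frobenius norm `‖X‖_{F,r} = sqrt(∑_{i=1}^r σ_i(X)²)` is the maximum of
`|⟨X, Y⟩|` over all matrices `Y` with `‖Y‖_F ≤ 1` and `rank Y ≤ r`, where the inner
product is `⟨X,Y⟩ = trace(Xᵀ Y)`. -/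
theorem partialFro_eq_max_inner {n₁ n₂ r : ℕ}
    (X : Matrix (Fin n₁) (Fin n₂) ℝ)
    (U : Matrix (Fin n₁) (Fin (min n₁ n₂)) ℝ) (σ : Fin (min n₁ n₂) → ℝ)
    (V : Matrix (Fin n₂) (Fin (min n₁ n₂)) ℝ)
    (hSVD : IsSVD X U σ V) (hr1 : 1 ≤ r) (hr : r ≤ min n₁ n₂) :
    IsGreatest {c : ℝ | ∃ Y : Matrix (Fin n₁) (Fin n₂) ℝ,
        frob Y ≤ 1 ∧ Y.rank ≤ r ∧ c = |Matrix.trace (Xᵀ * Y)|}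
      (Real.sqrt (∑ i : Fin r, (σ (Fin.castLE hr i)) ^ 2)) :=
  partialFro_eq_max_inner_general X U σ V hSVD hr
end

section
/- For any real n₁×n₂ matrix X and any integer r with 1 ≤ r ≤ min(n₁,n₂), the partial Frobenius norm ‖X‖_{F,r} := sqrt(Σ_{i=1}^r σ_i(X)²) equals the maximum of ‖X·R‖_F over all n₂×r matrices R with operator norm ‖R‖_op ≤ 1. -/
open Matrix

/-- The operator norm (largest singular value) of a matrix. -/
noncomputable def opNorm {n₁ n₂ : ℕ} (A : Matrix (Fin n₁) (Fin n₂) ℝ) : ℝ :=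
  ‖LinearMap.toContinuousLinearMap (Matrix.toEuclideanLin A)‖

/-! Write `X R = U (diag σ) B` with `B = Vᵀ R`. Since `U` has orthonormal columns,
`‖X R‖_F² = ∑ᵢ σᵢ² bᵢ`, where `bᵢ` is the squared norm of the `i`-th row of `B`. As
`‖B‖_op ≤ ‖Vᵀ‖_op ‖R‖_op ≤ 1`, every row and every column of `B` has norm at most `1`, so
`0 ≤ bᵢ ≤ 1` and `∑ᵢ bᵢ = ‖B‖_F² ≤ r`. Under these constraints a weighted sum with
nonincreasing weights `σᵢ²` is at most the sum of the `r` largest weights, and this value is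
attained by `R` = the first `r` columns of `V`. -/

open scoped Matrix.Norms.L2Operator

def frobSq {m n : Type*} [Fintype m] [Fintype n] (A : Matrix m n ℝ) : ℝ :=
  ∑ i, ∑ j, A i j ^ 2

lemma frob_eq_sqrt_frobSq {n₁ n₂ : ℕ} (A : Matrix (Fin n₁) (Fin n₂) ℝ) :
    frob A = √(frobSq A) :=
  rfl

lemma opNorm_eq_l2_opNorm {n₁ n₂ : ℕ} (A : Matrix (Fin n₁) (Fin n₂) ℝ) : opNorm A = ‖A‖ :=
  rfl

section

variable {m n k : Type*} [Fintype m] [Fintype n] [Fintype k]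

lemma frobSq_eq_trace (A : Matrix m n ℝ) : frobSq A = trace (Aᵀ * A) := by
  simp only [frobSq, trace, diag, mul_apply, transpose_apply, sq]
  exact Finset.sum_comm

lemma frobSq_mul_of_transpose_mul_self [DecidableEq k] {U : Matrix m k ℝ} (hU : Uᵀ * U = 1)
    (M : Matrix k n ℝ) : frobSq (U * M) = frobSq M := by
  rw [frobSq_eq_trace, frobSq_eq_trace, transpose_mul, Matrix.mul_assoc, ← Matrix.mul_assoc Uᵀ,
    hU, Matrix.one_mul]

lemma frobSq_diagonal_mul [DecidableEq m] (σ : m → ℝ) (B : Matrix m n ℝ) :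
    frobSq (diagonal σ * B) = ∑ i, σ i ^ 2 * ∑ j, B i j ^ 2 := by
  simp only [frobSq, diagonal_mul, mul_pow, Finset.mul_sum]

lemma l2_opNorm_transpose [DecidableEq m] [DecidableEq n] (A : Matrix m n ℝ) : ‖Aᵀ‖ = ‖A‖ := by
  rw [← conjTranspose_eq_transpose_of_trivial, l2_opNorm_conjTranspose]

lemma l2_opNorm_le_one_of_transpose_mul_self [DecidableEq n] {V : Matrix m n ℝ}
    (hV : Vᵀ * V = 1) : ‖V‖ ≤ 1 := by
  have h : ‖V‖ * ‖V‖ ≤ 1 := by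
    rw [← l2_opNorm_conjTranspose_mul_self, conjTranspose_eq_transpose_of_trivial, hV,
      ← diagonal_one, l2_opNorm_diagonal]
    exact pi_norm_le_iff_of_nonneg zero_le_one |>.mpr fun _ => norm_one.le
  nlinarith [norm_nonneg V]

lemma sum_sq_mulVec_le [DecidableEq n] {A : Matrix m n ℝ} (hA : ‖A‖ ≤ 1) (x : n → ℝ) :
    ∑ i, (A *ᵥ x) i ^ 2 ≤ ∑ j, x j ^ 2 := by
  have h := (l2_opNorm_mulVec A (WithLp.toLp 2 x)).trans
    (mul_le_of_le_one_left (norm_nonneg _) hA)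
  simp only [EuclideanSpace.norm_eq, Real.norm_eq_abs, sq_abs] at h
  exact (Real.sqrt_le_sqrt_iff (by positivity)).mp h

lemma sum_sq_col_le_one [DecidableEq n] {A : Matrix m n ℝ} (hA : ‖A‖ ≤ 1) (j : n) :
    ∑ i, A i j ^ 2 ≤ 1 := by
  simpa [sq, Pi.single_apply] using sum_sq_mulVec_le hA (Pi.single j 1)

lemma sum_sq_row_le_one [DecidableEq m] [DecidableEq n] {A : Matrix m n ℝ} (hA : ‖A‖ ≤ 1)
    (i : m) : ∑ j, A i j ^ 2 ≤ 1 :=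
  sum_sq_col_le_one (A := Aᵀ) ((l2_opNorm_transpose A).trans_le hA) i

lemma frobSq_le_card [DecidableEq n] {A : Matrix m n ℝ} (hA : ‖A‖ ≤ 1) :
    frobSq A ≤ Fintype.card n := by
  rw [frobSq, Finset.sum_comm]
  simpa using Finset.sum_le_sum fun j (_ : j ∈ Finset.univ) => sum_sq_col_le_one hA j

end

lemma transpose_mul_self_submatrix_eq_one {m n l : Type*} [Fintype m] [DecidableEq n]
    [DecidableEq l] {V : Matrix m n ℝ} (hV : Vᵀ * V = 1) (e : l ↪ n) :
    (V.submatrix id e)ᵀ * V.submatrix id e = 1 := by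
  rw [transpose_submatrix, ← submatrix_mul _ _ _ _ _ Function.bijective_id, hV,
    submatrix_one_embedding]

lemma sum_mul_le_sum_of_sum_le_card {ι : Type*} [DecidableEq ι] {s t : Finset ι} (hts : t ⊆ s)
    {f g : ι → ℝ} {c : ℝ} (hc : 0 ≤ c) (hft : ∀ i ∈ t, c ≤ f i) (hfs : ∀ i ∈ s \ t, f i ≤ c)
    (hgt : ∀ i ∈ t, g i ≤ 1) (hgs : ∀ i ∈ s \ t, 0 ≤ g i) (hg : ∑ i ∈ s, g i ≤ t.card) :
    ∑ i ∈ s, f i * g i ≤ ∑ i ∈ t, f i := by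
  have hin : ∑ i ∈ t, f i * g i ≤ ∑ i ∈ t, f i + c * (∑ i ∈ t, g i - t.card) := by
    have hle : ∀ i ∈ t, f i * g i ≤ f i + c * (g i - 1) := fun i hi => by
      nlinarith [hft i hi, hgt i hi]
    calc ∑ i ∈ t, f i * g i ≤ ∑ i ∈ t, (f i + c * (g i - 1)) := Finset.sum_le_sum hle
      _ = ∑ i ∈ t, f i + c * (∑ i ∈ t, g i - t.card) := by
        rw [Finset.sum_add_distrib, ← Finset.mul_sum, Finset.sum_sub_distrib]
        simp
  have hout : ∑ i ∈ s \ t, f i * g i ≤ c * ∑ i ∈ s \ t, g i := by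
    rw [Finset.mul_sum]
    exact Finset.sum_le_sum fun i hi => mul_le_mul_of_nonneg_right (hfs i hi) (hgs i hi)
  rw [← Finset.sum_sdiff hts] at hg ⊢
  nlinarith

namespace IsSVD

variable {n₁ n₂ k r : ℕ} {X : Matrix (Fin n₁) (Fin n₂) ℝ} {U : Matrix (Fin n₁) (Fin k) ℝ}
  {σ : Fin k → ℝ} {V : Matrix (Fin n₂) (Fin k) ℝ}

lemma frobSq_mul (h : IsSVD X U σ V) (R : Matrix (Fin n₂) (Fin r) ℝ) :
    frobSq (X * R) = ∑ i, σ i ^ 2 * ∑ j, (Vᵀ * R) i j ^ 2 := by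
  obtain ⟨rfl, hU, -⟩ := h
  rw [Matrix.mul_assoc, Matrix.mul_assoc, frobSq_mul_of_transpose_mul_self hU,
    frobSq_diagonal_mul]

lemma frobSq_mul_le (h : IsSVD X U σ V) (hr : r ≤ k) {R : Matrix (Fin n₂) (Fin r) ℝ}
    (hR : ‖R‖ ≤ 1) : frobSq (X * R) ≤ ∑ i : Fin r, σ (Fin.castLE hr i) ^ 2 := by
  have hsum := Finset.sum_map Finset.univ (Fin.castLEEmb hr) (fun i => σ i ^ 2)
  rw [Fin.coe_castLEEmb] at hsum
  rw [h.frobSq_mul, ← hsum]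
  obtain ⟨-, -, hV, hanti, hσ⟩ := h
  have hB : ‖Vᵀ * R‖ ≤ 1 := by
    refine (l2_opNorm_mul _ _).trans (mul_le_one₀ ?_ (norm_nonneg _) hR)
    exact (l2_opNorm_transpose V).trans_le (l2_opNorm_le_one_of_transpose_mul_self hV)
  have hmem : ∀ i : Fin k, i ∈ Finset.univ.map (Fin.castLEEmb hr) ↔ (i : ℕ) < r := fun i => by
    refine ⟨fun hi => ?_, fun hi => Finset.mem_map.2 ⟨⟨i, hi⟩, Finset.mem_univ _, rfl⟩⟩
    obtain ⟨j, -, rfl⟩ := Finset.mem_map.1 hi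
    exact j.isLt
  refine sum_mul_le_sum_of_sum_le_card (Finset.subset_univ _)
    (c := if hrk : r < k then σ ⟨r, hrk⟩ ^ 2 else 0) (by split_ifs <;> positivity) ?_ ?_
    (fun i _ => sum_sq_row_le_one hB i) (fun i _ => by positivity) ?_
  · intro i hi
    split_ifs with hrk
    · exact pow_le_pow_left₀ (hσ _) (hanti (Fin.mk_le_mk.2 ((hmem i).1 hi).le)) 2
    · positivity
  · intro i hi
    have hri : r ≤ i := not_lt.1 fun h' => (Finset.mem_sdiff.1 hi).2 ((hmem i).2 h')
    rw [dif_pos (hri.trans_lt i.isLt)]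
    exact pow_le_pow_left₀ (hσ _) (hanti (Fin.mk_le_mk.2 hri)) 2
  · simpa [frobSq] using frobSq_le_card hB

lemma l2_opNorm_submatrix_castLE_le_one (h : IsSVD X U σ V) (hr : r ≤ k) :
    ‖V.submatrix id (Fin.castLE hr)‖ ≤ 1 :=
  l2_opNorm_le_one_of_transpose_mul_self
    (transpose_mul_self_submatrix_eq_one h.2.2.1 (Fin.castLEEmb hr))

lemma frobSq_mul_submatrix_castLE (h : IsSVD X U σ V) (hr : r ≤ k) :
    frobSq (X * V.submatrix id (Fin.castLE hr)) = ∑ i : Fin r, σ (Fin.castLE hr i) ^ 2 := by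
  have hVR : Vᵀ * V.submatrix id (Fin.castLE hr) =
      (1 : Matrix (Fin k) (Fin k) ℝ).submatrix id (Fin.castLE hr) := by
    rw [← h.2.2.1, submatrix_mul _ _ _ _ _ Function.bijective_id, submatrix_id_id]
  simp only [h.frobSq_mul, hVR, Finset.mul_sum, submatrix_apply, id, one_apply, ite_pow, one_pow,
    zero_pow two_ne_zero, mul_ite, mul_one, mul_zero]
  rw [Finset.sum_comm]
  simp

end IsSVD

theorem partialFro_eq_max_opNorm_le_one_general {n₁ n₂ r : ℕ}
    (X : Matrix (Fin n₁) (Fin n₂) ℝ)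
    (U : Matrix (Fin n₁) (Fin (min n₁ n₂)) ℝ) (σ : Fin (min n₁ n₂) → ℝ)
    (V : Matrix (Fin n₂) (Fin (min n₁ n₂)) ℝ)
    (hSVD : IsSVD X U σ V) (hr : r ≤ min n₁ n₂) :
    IsGreatest {c : ℝ | ∃ R : Matrix (Fin n₂) (Fin r) ℝ, opNorm R ≤ 1 ∧ c = frob (X * R)}
      (Real.sqrt (∑ i : Fin r, (σ (Fin.castLE hr i)) ^ 2)) := by
  refine ⟨⟨V.submatrix id (Fin.castLE hr), ?_, ?_⟩, ?_⟩
  · rw [opNorm_eq_l2_opNorm]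
    exact hSVD.l2_opNorm_submatrix_castLE_le_one hr
  · rw [frob_eq_sqrt_frobSq, hSVD.frobSq_mul_submatrix_castLE hr]
  · rintro _ ⟨R, hR, rfl⟩
    rw [opNorm_eq_l2_opNorm] at hR
    rw [frob_eq_sqrt_frobSq]
    exact Real.sqrt_le_sqrt (hSVD.frobSq_mul_le hr hR)

/-- The partial Frobenius norm `‖X‖_{F,r} = sqrt(∑_{i=1}^r σ_i(X)²)` is the maximum of
`‖X R‖_F` over all `n₂ × r` matrices `R` with operator norm at most 1. -/
theorem partialFro_eq_max_opNorm_le_one {n₁ n₂ r : ℕ}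
    (X : Matrix (Fin n₁) (Fin n₂) ℝ)
    (U : Matrix (Fin n₁) (Fin (min n₁ n₂)) ℝ) (σ : Fin (min n₁ n₂) → ℝ)
    (V : Matrix (Fin n₂) (Fin (min n₁ n₂)) ℝ)
    (hSVD : IsSVD X U σ V) (hr1 : 1 ≤ r) (hr : r ≤ min n₁ n₂) :
    IsGreatest {c : ℝ | ∃ R : Matrix (Fin n₂) (Fin r) ℝ, opNorm R ≤ 1 ∧ c = frob (X * R)}
      (Real.sqrt (∑ i : Fin r, (σ (Fin.castLE hr i)) ^ 2)) :=
  partialFro_eq_max_opNorm_le_one_general X U σ V hSVD hr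
end

section
/- Let X be a real n₁×n₂ matrix, r ≤ min(n₁,n₂), and let P_r(X) denote the best rank-r approximation of X in Frobenius norm (given by the truncated SVD). Then for every n₁×n₂ matrix Y of rank at most r, one has ‖X − P_r(X)‖_{F,r} ≤ ‖X − Y‖_{F,r}, where ‖A‖_{F,r} := sqrt(Σ_{i=1}^r σ_i(A)²). -/
/-!
Let `τ` be the singular values of `X`. By Weyl's inequality, `τ_{r+i} ≤ σ_i(X - W)` for every
`W` of rank at most `r`, so `∑_{i<r} σ_i(X - Y)² ≥ ∑_{i<r} τ_{r+i}²`. For `W = P` the same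
inequality holds termwise for all `i`, while Eckart–Young (truncating an SVD of `X`) gives
`∑_i σ_i(X - P)² = ‖X - P‖_F² ≤ ∑_i τ_{r+i}²`. Hence `σ_i(X - P) = τ_{r+i}` for every `i`, and in
particular `∑_{i<r} σ_i(X - P)² = ∑_{i<r} τ_{r+i}²`.
-/

open Matrix

open Finset

def extendByZero {k : ℕ} (σ : Fin k → ℝ) (i : ℕ) : ℝ :=
  if h : i < k then σ ⟨i, h⟩ else 0

section extendByZero

variable {k : ℕ} {σ : Fin k → ℝ}

lemma extendByZero_of_lt {i : ℕ} (hi : i < k) : extendByZero σ i = σ ⟨i, hi⟩ := dif_pos hi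

@[simp]
lemma extendByZero_val (i : Fin k) : extendByZero σ i = σ i := extendByZero_of_lt i.isLt

lemma extendByZero_castLE {r : ℕ} (h : r ≤ k) (i : Fin r) :
    extendByZero σ i = σ (Fin.castLE h i) :=
  extendByZero_val (Fin.castLE h i)

lemma extendByZero_of_le {i : ℕ} (hi : k ≤ i) : extendByZero σ i = 0 :=
  dif_neg hi.not_gt

lemma extendByZero_nonneg (hσ : ∀ i, 0 ≤ σ i) (i : ℕ) : 0 ≤ extendByZero σ i := by
  unfold extendByZero; split_ifs <;> simp [hσ]

lemma antitone_extendByZero (hσ : Antitone σ) (hσ₀ : ∀ i, 0 ≤ σ i) :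
    Antitone (extendByZero σ) := by
  intro i j hij
  by_cases hj : j < k
  · rw [extendByZero_of_lt hj, extendByZero_of_lt (hij.trans_lt hj)]
    exact hσ hij
  · rw [extendByZero_of_le (not_lt.mp hj)]
    exact extendByZero_nonneg hσ₀ i

lemma sum_range_extendByZero {N : ℕ} (hk : k ≤ N) (f : ℕ → ℝ → ℝ) (hf : ∀ i, f i 0 = 0) :
    ∑ i ∈ range N, f i (extendByZero σ i) = ∑ i : Fin k, f i (σ i) := by
  rw [← sum_range_add_sum_Ico _ hk, sum_eq_zero (s := Ico k N), add_zero,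
    ← Fin.sum_univ_eq_sum_range]
  · simp
  · intro i hi
    rw [extendByZero_of_le (mem_Ico.mp hi).1, hf]

end extendByZero

lemma sum_range_le_sum_range_of_le_of_sum_le {a t : ℕ → ℝ} {r K : ℕ} (hrK : r ≤ K)
    (hta : ∀ i, t i ≤ a i) (hsum : ∑ i ∈ range K, a i ≤ ∑ i ∈ range K, t i) :
    ∑ i ∈ range r, a i ≤ ∑ i ∈ range r, t i := by
  have htail : ∑ i ∈ Ico r K, t i ≤ ∑ i ∈ Ico r K, a i := sum_le_sum fun i _ => hta i
  rw [← sum_range_add_sum_Ico _ hrK, ← sum_range_add_sum_Ico _ hrK] at hsum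
  linarith

lemma frob_nonneg {n₁ n₂ : ℕ} (A : Matrix (Fin n₁) (Fin n₂) ℝ) : 0 ≤ frob A :=
  Real.sqrt_nonneg _

lemma frob_sq_eq_trace {n₁ n₂ : ℕ} (A : Matrix (Fin n₁) (Fin n₂) ℝ) :
    frob A ^ 2 = (Aᵀ * A).trace := by
  rw [frob, Real.sq_sqrt (by positivity), sum_comm]
  simp [Matrix.trace, Matrix.mul_apply, sq]

lemma dotProduct_mulVec_self {m n : ℕ} (M : Matrix (Fin m) (Fin n) ℝ) (v : Fin n → ℝ) :
    (M *ᵥ v) ⬝ᵥ (M *ᵥ v) = v ⬝ᵥ ((Mᵀ * M) *ᵥ v) := by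
  rw [← mulVec_mulVec, dotProduct_mulVec v, vecMul_transpose, dotProduct_comm]

lemma dotProduct_transpose_mulVec_le {n k : ℕ} {V : Matrix (Fin n) (Fin k) ℝ} (hV : Vᵀ * V = 1)
    (w : Fin n → ℝ) : (Vᵀ *ᵥ w) ⬝ᵥ (Vᵀ *ᵥ w) ≤ w ⬝ᵥ w := by
  set p := V *ᵥ (Vᵀ *ᵥ w)
  -- Bessel: `p` is the orthogonal projection of `w` onto the column space of `V`.
  have hp : p ⬝ᵥ p = (Vᵀ *ᵥ w) ⬝ᵥ (Vᵀ *ᵥ w) := by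
    rw [dotProduct_mulVec_self, hV, one_mulVec]
  have hpw : p ⬝ᵥ w = (Vᵀ *ᵥ w) ⬝ᵥ (Vᵀ *ᵥ w) := by
    rw [dotProduct_comm, dotProduct_mulVec, ← mulVec_transpose]
  have : 0 ≤ (w - p) ⬝ᵥ (w - p) := sum_nonneg fun i _ => mul_self_nonneg _
  rw [sub_dotProduct, dotProduct_sub, dotProduct_sub, dotProduct_comm w p, hp, hpw] at this
  linarith

lemma transpose_submatrix_mul_mul_submatrix {n k d : ℕ} (V : Matrix (Fin n) (Fin k) ℝ)
    (M : Matrix (Fin n) (Fin n) ℝ) (g : Fin d → Fin k) :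
    (V.submatrix id g)ᵀ * M * V.submatrix id g = (Vᵀ * M * V).submatrix g g := by
  rw [submatrix_mul _ _ _ id _ Function.bijective_id,
    submatrix_mul _ _ _ id _ Function.bijective_id]
  rfl

lemma transpose_submatrix_mul_submatrix_self {n k d : ℕ} {V : Matrix (Fin n) (Fin k) ℝ}
    (hV : Vᵀ * V = 1) {g : Fin d → Fin k} (hg : Function.Injective g) :
    (V.submatrix id g)ᵀ * V.submatrix id g = 1 := by
  rw [← Matrix.mul_one (V.submatrix id g)ᵀ, transpose_submatrix_mul_mul_submatrix, Matrix.mul_one,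
    hV, submatrix_one _ hg]

lemma exists_ne_zero_mulVec_eq_zero_of_rank_add_rank_lt {K m₁ m₂ n : Type*} [Field K]
    [Fintype m₁] [Fintype m₂] [Fintype n] (M₁ : Matrix m₁ n K) (M₂ : Matrix m₂ n K)
    (h : M₁.rank + M₂.rank < Fintype.card n) :
    ∃ c ≠ 0, M₁ *ᵥ c = 0 ∧ M₂ *ᵥ c = 0 := by
  -- `c ↦ (M₁ c, M₂ c)` maps into a space of dimension `rank M₁ + rank M₂`.
  have hker := LinearMap.ker_ne_bot_of_finrank_lt
    (f := M₁.mulVecLin.rangeRestrict.prod M₂.mulVecLin.rangeRestrict)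
    (by rwa [Module.finrank_prod, Module.finrank_fintype_fun_eq_card])
  rw [LinearMap.ker_prod, LinearMap.ker_rangeRestrict, LinearMap.ker_rangeRestrict] at hker
  obtain ⟨c, ⟨hc₁, hc₂⟩, hc⟩ := Submodule.exists_mem_ne_zero_of_ne_bot hker
  exact ⟨c, hc, hc₁, hc₂⟩

/-- The right half `(V, σ)` of a singular value decomposition of `A`. Unlike `IsSVD`, it is
produced directly by the spectral theorem for `Aᵀ * A`. -/
structure IsRightSVD {n₁ n₂ k : ℕ} (A : Matrix (Fin n₁) (Fin n₂) ℝ)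
    (V : Matrix (Fin n₂) (Fin k) ℝ) (σ : Fin k → ℝ) : Prop where
  gram_eq : Aᵀ * A = V * diagonal (fun i => σ i ^ 2) * Vᵀ
  orthonormal : Vᵀ * V = 1
  antitone : Antitone σ
  nonneg : ∀ i, 0 ≤ σ i

lemma IsSVD.isRightSVD {n₁ n₂ k : ℕ} {X : Matrix (Fin n₁) (Fin n₂) ℝ}
    {U : Matrix (Fin n₁) (Fin k) ℝ} {σ : Fin k → ℝ} {V : Matrix (Fin n₂) (Fin k) ℝ}
    (h : IsSVD X U σ V) : IsRightSVD X V σ := by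
  obtain ⟨rfl, hU, hV, hσ, hσ₀⟩ := h
  refine ⟨?_, hV, hσ, hσ₀⟩
  calc (U * diagonal σ * Vᵀ)ᵀ * (U * diagonal σ * Vᵀ)
      = V * (diagonal σ * (Uᵀ * U) * diagonal σ) * Vᵀ := by
        simp only [transpose_mul, diagonal_transpose, transpose_transpose, Matrix.mul_assoc]
    _ = V * diagonal (fun i => σ i ^ 2) * Vᵀ := by
        simp only [hU, Matrix.mul_one, diagonal_mul_diagonal, sq]

lemma exists_isRightSVD_of_transpose_mul_self_eq {n₁ n₂ : ℕ} {X : Matrix (Fin n₁) (Fin n₂) ℝ}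
    {U : Matrix (Fin n₂) (Fin n₂) ℝ} {μ : Fin n₂ → ℝ} (hXU : Xᵀ * X = U * diagonal μ * Uᵀ)
    (hU : Uᵀ * U = 1) (hμ : ∀ j, 0 ≤ μ j) :
    ∃ (V : Matrix (Fin n₂) (Fin n₂) ℝ) (τ : Fin n₂ → ℝ), IsRightSVD X V τ := by
  -- Reorder the columns of `U` so that the `μ j` decrease.
  set e : Equiv.Perm (Fin n₂) := Fin.revPerm.trans (Tuple.sort μ)
  refine ⟨U.submatrix id e, fun j => √(μ (e j)), ?_, ?_, ?_, fun j => Real.sqrt_nonneg _⟩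
  · have hD : (diagonal fun j => √(μ (e j)) ^ 2) = (diagonal μ).submatrix e e := by
      rw [submatrix_diagonal_equiv]
      exact congrArg diagonal (funext fun j => Real.sq_sqrt (hμ _))
    rw [hXU, hD, transpose_submatrix, ← submatrix_mul _ _ _ _ _ e.bijective,
      ← submatrix_mul _ _ _ _ _ e.bijective, submatrix_id_id]
  · rw [transpose_submatrix, ← submatrix_mul _ _ _ _ _ Function.bijective_id, hU,
      submatrix_one_equiv]
  · intro a b hab
    exact Real.sqrt_le_sqrt (Tuple.monotone_sort μ (Fin.rev_le_rev.mpr hab))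

lemma exists_isRightSVD {n₁ n₂ : ℕ} (X : Matrix (Fin n₁) (Fin n₂) ℝ) :
    ∃ (V : Matrix (Fin n₂) (Fin n₂) ℝ) (τ : Fin n₂ → ℝ), IsRightSVD X V τ := by
  have hS : (Xᵀ * X).IsHermitian := by
    simpa using isHermitian_conjTranspose_mul_self X
  refine exists_isRightSVD_of_transpose_mul_self_eq (U := hS.eigenvectorUnitary) ?_ ?_
    (by simpa using (posSemidef_conjTranspose_mul_self X).eigenvalues_nonneg)
  · simpa [Unitary.conjStarAlgAut_apply, star_eq_conjTranspose] using hS.spectral_theorem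
  · simpa [star_eq_conjTranspose] using Unitary.coe_star_mul_self hS.eigenvectorUnitary

namespace IsRightSVD

variable {n₁ n₂ k : ℕ} {A : Matrix (Fin n₁) (Fin n₂) ℝ}

section

variable {V : Matrix (Fin n₂) (Fin k) ℝ} {σ : Fin k → ℝ}

lemma frob_sq (h : IsRightSVD A V σ) : frob A ^ 2 = ∑ i, σ i ^ 2 := by
  rw [frob_sq_eq_trace, h.gram_eq, trace_mul_cycle, h.orthonormal, Matrix.one_mul, trace_diagonal]

lemma dotProduct_mulVec_self_eq (h : IsRightSVD A V σ) (w : Fin n₂ → ℝ) :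
    (A *ᵥ w) ⬝ᵥ (A *ᵥ w) = ∑ l, σ l ^ 2 * (Vᵀ *ᵥ w) l ^ 2 := by
  rw [dotProduct_mulVec_self, h.gram_eq, ← mulVec_mulVec, ← mulVec_mulVec, dotProduct_mulVec,
    ← mulVec_transpose]
  simp only [dotProduct, mulVec_diagonal, sq]
  exact sum_congr rfl fun l _ => by ring

lemma sq_mul_le_dotProduct_mulVec_self (h : IsRightSVD A V σ) (m : Fin k) {w : Fin n₂ → ℝ}
    (hw : ∀ l, m < l → (Vᵀ *ᵥ w) l = 0) :
    σ m ^ 2 * ((Vᵀ *ᵥ w) ⬝ᵥ (Vᵀ *ᵥ w)) ≤ (A *ᵥ w) ⬝ᵥ (A *ᵥ w) := by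
  rw [h.dotProduct_mulVec_self_eq, dotProduct, mul_sum]
  refine sum_le_sum fun l _ => ?_
  rcases le_or_gt l m with hlm | hml
  · rw [← sq]
    exact mul_le_mul_of_nonneg_right (pow_le_pow_left₀ (h.nonneg m) (h.antitone hlm) 2)
      (sq_nonneg _)
  · simp [hw l hml]

lemma dotProduct_mulVec_self_le (h : IsRightSVD A V σ) (i : ℕ) {w : Fin n₂ → ℝ}
    (hw : ∀ l : Fin k, (l : ℕ) < i → (Vᵀ *ᵥ w) l = 0) :
    (A *ᵥ w) ⬝ᵥ (A *ᵥ w) ≤ extendByZero σ i ^ 2 * (w ⬝ᵥ w) := by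
  calc (A *ᵥ w) ⬝ᵥ (A *ᵥ w) ≤ ∑ l, extendByZero σ i ^ 2 * (Vᵀ *ᵥ w) l ^ 2 := by
        rw [h.dotProduct_mulVec_self_eq]
        refine sum_le_sum fun l _ => ?_
        rcases lt_or_ge (l : ℕ) i with hli | hil
        · simp [hw l hli]
        · have hσl : σ l ≤ extendByZero σ i := by
            simpa using antitone_extendByZero h.antitone h.nonneg hil
          exact mul_le_mul_of_nonneg_right (pow_le_pow_left₀ (h.nonneg l) hσl 2) (sq_nonneg _)
    _ = extendByZero σ i ^ 2 * ((Vᵀ *ᵥ w) ⬝ᵥ (Vᵀ *ᵥ w)) := by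
        simp only [dotProduct, mul_sum, sq]
    _ ≤ extendByZero σ i ^ 2 * (w ⬝ᵥ w) :=
        mul_le_mul_of_nonneg_left (dotProduct_transpose_mulVec_le h.orthonormal w) (sq_nonneg _)

lemma mul_submatrix (h : IsRightSVD A V σ) {d : ℕ} {g : Fin d → Fin k} (hg : StrictMono g) :
    IsRightSVD (A * V.submatrix id g) 1 (σ ∘ g) := by
  refine ⟨?_, by simp, h.antitone.comp_monotone hg.monotone, fun i => h.nonneg (g i)⟩
  rw [transpose_mul, Matrix.mul_assoc, ← Matrix.mul_assoc Aᵀ,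
    ← Matrix.mul_assoc, transpose_submatrix_mul_mul_submatrix, h.gram_eq]
  simp only [Matrix.mul_assoc, h.orthonormal, ← Matrix.mul_assoc Vᵀ V]
  simp [submatrix_diagonal _ _ hg.injective]

lemma frob_sq_mul_diagonal_mul_transpose (h : IsRightSVD A V σ) (w : Fin k → ℝ) :
    frob (A * V * diagonal w * Vᵀ) ^ 2 = ∑ j, w j ^ 2 * σ j ^ 2 := by
  set N := A * V * diagonal w
  have hN : Nᵀ * N = diagonal fun j => w j ^ 2 * σ j ^ 2 := by
    simp only [N, transpose_mul, diagonal_transpose, Matrix.mul_assoc, ← Matrix.mul_assoc Aᵀ,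
      h.gram_eq]
    simp only [← Matrix.mul_assoc, h.orthonormal, Matrix.one_mul]
    rw [diagonal_mul_diagonal, diagonal_mul_diagonal]
    congr 1; ext j; ring
  rw [frob_sq_eq_trace, transpose_mul, transpose_transpose, ← Matrix.mul_assoc, trace_mul_comm]
  simp only [← Matrix.mul_assoc, h.orthonormal, Matrix.one_mul, hN, trace_diagonal]

end

/-- Eckart–Young: truncating the right singular system after `r` vectors. -/
lemma exists_rank_le_frob_sq_eq {V : Matrix (Fin n₂) (Fin n₂) ℝ} {τ : Fin n₂ → ℝ}
    (h : IsRightSVD A V τ) (r : ℕ) :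
    ∃ Z : Matrix (Fin n₁) (Fin n₂) ℝ, Z.rank ≤ r ∧
      frob (A - Z) ^ 2 = ∑ i ∈ range n₂, extendByZero τ (r + i) ^ 2 := by
  classical
  set e : Fin n₂ → ℝ := fun j => if (j : ℕ) < r then 1 else 0
  refine ⟨A * V * diagonal e * Vᵀ, ?_, ?_⟩
  · refine ((rank_mul_le_left _ _).trans (rank_mul_le_right _ _)).trans ?_
    rw [rank_diagonal, Fintype.card_subtype]
    simp only [e, ne_eq, ite_eq_right_iff, one_ne_zero, imp_false, not_not, Fin.card_filter_val_lt]
    exact min_le_right _ _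
  · have hAZ : A - A * V * diagonal e * Vᵀ = A * V * diagonal (1 - e) * Vᵀ := by
      have hVV : V * Vᵀ = 1 := mul_eq_one_comm.mp h.orthonormal
      have hD : diagonal (1 - e) = 1 - diagonal e := by rw [← diagonal_one', diagonal_sub]; rfl
      rw [hD, Matrix.mul_sub, Matrix.sub_mul, Matrix.mul_one, Matrix.mul_assoc A V Vᵀ, hVV,
        Matrix.mul_one]
    rw [hAZ, h.frob_sq_mul_diagonal_mul_transpose]
    calc ∑ j, (1 - e) j ^ 2 * τ j ^ 2 = ∑ j : Fin n₂, (if (j : ℕ) < r then 0 else τ j ^ 2) := by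
          refine sum_congr rfl fun j _ => ?_
          by_cases hj : (j : ℕ) < r <;> simp [e, hj]
      _ = ∑ i ∈ range (r + n₂), if i < r then 0 else extendByZero τ i ^ 2 :=
          (sum_range_extendByZero (Nat.le_add_left _ _) (fun i x => if i < r then 0 else x ^ 2)
            (by simp)).symm
      _ = ∑ i ∈ range n₂, extendByZero τ (r + i) ^ 2 := by
          rw [sum_range_add, sum_eq_zero fun i hi => if_pos (mem_range.mp hi), zero_add]
          simp

section

variable {kA kB r : ℕ} {B Y : Matrix (Fin n₁) (Fin n₂) ℝ}
  {VA : Matrix (Fin n₂) (Fin kA) ℝ} {σA : Fin kA → ℝ}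
  {VB : Matrix (Fin n₂) (Fin kB) ℝ} {σB : Fin kB → ℝ}

lemma le_extendByZero_of_eq_add (hA : IsRightSVD A VA σA) (hB : IsRightSVD B VB σB)
    (hAB : A = B + Y) (hY : Y.rank ≤ r) {i : ℕ} {j : Fin kA} (hij : r + i ≤ j) :
    σA j ≤ extendByZero σB i := by
  -- Pick `w ≠ 0` in the span of the first `j + 1` right singular vectors of `A`, in `ker Y`, and
  -- orthogonal to the first `i` right singular vectors of `B` (possible as `r + i < j + 1`).
  -- Then `σA j * ‖w‖ ≤ ‖A w‖ = ‖B w‖ ≤ σB i * ‖w‖`.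
  set g : Fin (j + 1) → Fin kA := Fin.castLE j.isLt
  set W := VA.submatrix id g
  obtain ⟨c, hc, hYc, hBc⟩ := exists_ne_zero_mulVec_eq_zero_of_rank_add_rank_lt (Y * W)
    ((VBᵀ * W).submatrix (Fin.castLE (min_le_right i kB)) id) (by
      have := (rank_mul_le_left Y W).trans hY
      have := rank_le_height ((VBᵀ * W).submatrix (Fin.castLE (min_le_right i kB)) id)
      rw [Fintype.card_fin]
      omega)
  have hWc : (W *ᵥ c) ⬝ᵥ (W *ᵥ c) = c ⬝ᵥ c := by
    rw [dotProduct_mulVec_self,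
      transpose_submatrix_mul_submatrix_self hA.orthonormal (Fin.castLE_injective _), one_mulVec]
  have hlow : σA j ^ 2 * (c ⬝ᵥ c) ≤ (A *ᵥ (W *ᵥ c)) ⬝ᵥ (A *ᵥ (W *ᵥ c)) := by
    have hlast : Fin.castLE j.isLt (Fin.last j) = j := Fin.ext rfl
    simpa only [transpose_one, one_mulVec, Function.comp_apply, hlast, ← mulVec_mulVec] using
      (hA.mul_submatrix (Fin.strictMono_castLE j.isLt)).sq_mul_le_dotProduct_mulVec_self
        (Fin.last j) (w := c) fun l hl => absurd hl (Fin.le_last l).not_gt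
  have hup : (B *ᵥ (W *ᵥ c)) ⬝ᵥ (B *ᵥ (W *ᵥ c)) ≤ extendByZero σB i ^ 2 * (c ⬝ᵥ c) := by
    rw [← hWc]
    refine hB.dotProduct_mulVec_self_le i fun l hl => ?_
    rw [mulVec_mulVec]
    exact congrFun hBc ⟨l, lt_min hl l.isLt⟩
  rw [← mulVec_mulVec] at hYc
  rw [hAB, add_mulVec, hYc, add_zero] at hlow
  have hcc : 0 < c ⬝ᵥ c :=
    lt_of_le_of_ne (sum_nonneg fun _ _ => mul_self_nonneg _)
      fun h => hc (dotProduct_self_eq_zero.mp h.symm)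
  exact (pow_le_pow_iff_left₀ (hA.nonneg j) (extendByZero_nonneg hB.nonneg i) two_ne_zero).mp
    (le_of_mul_le_mul_right (hlow.trans hup) hcc)

/-- Weyl's inequality. -/
lemma extendByZero_add_le (hA : IsRightSVD A VA σA) (hB : IsRightSVD B VB σB)
    (hAB : A = B + Y) (hY : Y.rank ≤ r) (i : ℕ) :
    extendByZero σA (r + i) ≤ extendByZero σB i := by
  by_cases hi : r + i < kA
  · rw [extendByZero_of_lt hi]
    exact hA.le_extendByZero_of_eq_add hB hAB hY le_rfl
  · rw [extendByZero_of_le (not_lt.mp hi)]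
    exact extendByZero_nonneg hB.nonneg i

end

end IsRightSVD

/-- The best rank-`r` approximation `P` of `X` in Frobenius norm is also a best rank-`r`
approximation of `X` under the partial Frobenius norm `‖·‖_{F,r}`: for every matrix `Y` of
rank at most `r`, `‖X − P‖_{F,r} ≤ ‖X − Y‖_{F,r}`, where the partial Frobenius norms are
expressed through the singular values of `X − P` and `X − Y`. -/
theorem best_rank_approx_partialFro {n₁ n₂ r : ℕ}
    (X P Y : Matrix (Fin n₁) (Fin n₂) ℝ) (hr : r ≤ min n₁ n₂)
    (hPrank : P.rank ≤ r)
    (hPbest : ∀ Z : Matrix (Fin n₁) (Fin n₂) ℝ, Z.rank ≤ r → frob (X - P) ≤ frob (X - Z))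
    (hYrank : Y.rank ≤ r)
    (UP : Matrix (Fin n₁) (Fin (min n₁ n₂)) ℝ) (σP : Fin (min n₁ n₂) → ℝ)
    (VP : Matrix (Fin n₂) (Fin (min n₁ n₂)) ℝ) (hSVDP : IsSVD (X - P) UP σP VP)
    (UY : Matrix (Fin n₁) (Fin (min n₁ n₂)) ℝ) (σY : Fin (min n₁ n₂) → ℝ)
    (VY : Matrix (Fin n₂) (Fin (min n₁ n₂)) ℝ) (hSVDY : IsSVD (X - Y) UY σY VY) :
    Real.sqrt (∑ i : Fin r, (σP (Fin.castLE hr i)) ^ 2) ≤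
      Real.sqrt (∑ i : Fin r, (σY (Fin.castLE hr i)) ^ 2) := by
  obtain ⟨V, τ, hX⟩ := exists_isRightSVD X
  have hP := hSVDP.isRightSVD
  have hY := hSVDY.isRightSVD
  have weyl : ∀ {W : Matrix (Fin n₁) (Fin n₂) ℝ} {VW : Matrix (Fin n₂) (Fin (min n₁ n₂)) ℝ}
      {σW : Fin (min n₁ n₂) → ℝ}, W.rank ≤ r →
      IsRightSVD (X - W) VW σW → ∀ i, extendByZero τ (r + i) ^ 2 ≤ extendByZero σW i ^ 2 :=
    fun hW hXW i => pow_le_pow_left₀ (extendByZero_nonneg hX.nonneg _)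
      (hX.extendByZero_add_le hXW (sub_add_cancel X _).symm hW i) 2
  obtain ⟨Z, hZ, hXZ⟩ := hX.exists_rank_le_frob_sq_eq r
  have hk : min n₁ n₂ ≤ n₂ := min_le_right _ _
  have eckartYoung :
      ∑ i ∈ range n₂, extendByZero σP i ^ 2 ≤ ∑ i ∈ range n₂, extendByZero τ (r + i) ^ 2 := by
    rw [sum_range_extendByZero hk (fun _ x => x ^ 2) (by simp), ← hP.frob_sq, ← hXZ]
    exact pow_le_pow_left₀ (frob_nonneg _) (hPbest Z hZ) 2
  simp only [← extendByZero_castLE hr]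
  rw [Fin.sum_univ_eq_sum_range (fun i => extendByZero σP i ^ 2),
    Fin.sum_univ_eq_sum_range (fun i => extendByZero σY i ^ 2)]
  exact Real.sqrt_le_sqrt ((sum_range_le_sum_range_of_le_of_sum_le (hr.trans hk)
    (weyl hPrank hP) eckartYoung).trans (sum_le_sum fun i _ => weyl hYrank hY i))
end

section
/- Let L_star ∈ R^{n₁×r} satisfy L_star = U_star·Σ_star^{1/2}, where U_star has orthonormal columns and Σ_star is an r×r positive diagonal matrix. Let L ∈ R^{n₁×r} with Δ_L := L − L_star, and suppose ‖Δ_L·Σ_star^{-1/2}‖_op < 1. Then L has full column rank and ‖L·(L^T L)^{-1}·Σ_star^{1/2}‖_op ≤ 1/(1 − ‖Δ_L·Σ_star^{-1/2}‖_op). -/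
/-!
Whitening by `Σ⋆^{-1/2}` turns `L` into `M = L Σ⋆^{-1/2}`, which lies within
`ε = ‖(L - L⋆) Σ⋆^{-1/2}‖` of the isometry `U⋆`; hence `‖M x‖ ≥ (1 - ε) ‖x‖`, so `M` and `L` are
injective and `L (LᵀL)⁻¹ Σ⋆^{1/2} = M (MᵀM)⁻¹`. For `x = (MᵀM)⁻¹ y` one has
`‖M x‖² = ⟪x, y⟫ ≤ ‖x‖ ‖y‖ ≤ ‖M x‖ ‖y‖ / (1 - ε)`, which is the operator-norm bound.
-/

open Matrix

section Euclidean

variable {m n : Type*} [Fintype m] [Fintype n] [DecidableEq n]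

theorem Matrix.inner_toEuclideanLin_self [DecidableEq m] (A : Matrix m n ℝ)
    (x : EuclideanSpace ℝ n) :
    inner ℝ (toEuclideanLin A x) (toEuclideanLin A x) = inner ℝ x (toEuclideanLin (Aᵀ * A) x) := by
  rw [toLpLin_mul_same, LinearMap.comp_apply, ← conjTranspose_eq_transpose_of_trivial,
    toEuclideanLin_conjTranspose_eq_adjoint, LinearMap.adjoint_inner_right]

theorem Matrix.norm_toEuclideanLin_of_transpose_mul_self_eq_one [DecidableEq m]
    {U : Matrix m n ℝ} (hU : Uᵀ * U = 1) (x : EuclideanSpace ℝ n) :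
    ‖toEuclideanLin U x‖ = ‖x‖ := by
  have h := inner_toEuclideanLin_self U x
  rw [hU, toLpLin_one, LinearMap.id_apply, real_inner_self_eq_norm_sq,
    real_inner_self_eq_norm_sq] at h
  exact (pow_left_inj₀ (norm_nonneg _) (norm_nonneg _) two_ne_zero).mp h

theorem Matrix.injective_mulVec_of_mul_norm_le {M : Matrix m n ℝ} {c : ℝ} (hc : 0 < c)
    (hM : ∀ x, c * ‖x‖ ≤ ‖toEuclideanLin M x‖) : Function.Injective M.mulVec := by
  change Function.Injective M.mulVecLin
  rw [← LinearMap.ker_eq_bot, LinearMap.ker_eq_bot']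
  intro v hv
  have h := hM (WithLp.toLp 2 v)
  rw [toLpLin_toLp, toLin'_apply, show M *ᵥ v = 0 from hv, WithLp.toLp_zero, norm_zero] at h
  simpa using (mul_nonpos_iff_pos_imp_nonpos.mp h).1 hc

theorem Matrix.isUnit_transpose_mul_self {M : Matrix m n ℝ} (hM : Function.Injective M.mulVec) :
    IsUnit (Mᵀ * M) := by
  simpa using (PosDef.conjTranspose_mul_self M hM).isUnit

theorem Matrix.mul_norm_toEuclideanLin_mul_inv_transpose_mul_self_le [DecidableEq m]
    {M : Matrix m n ℝ} {c : ℝ} (hc : 0 < c) (hM : ∀ x, c * ‖x‖ ≤ ‖toEuclideanLin M x‖)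
    (y : EuclideanSpace ℝ n) :
    c * ‖toEuclideanLin (M * (Mᵀ * M)⁻¹) y‖ ≤ ‖y‖ := by
  set x := toEuclideanLin (Mᵀ * M)⁻¹ y
  have hx : toEuclideanLin (Mᵀ * M) x = y := by
    rw [← LinearMap.comp_apply, ← toLpLin_mul_same,
      mul_nonsing_inv _ ((isUnit_iff_isUnit_det _).mp (isUnit_transpose_mul_self
        (injective_mulVec_of_mul_norm_le hc hM))), toLpLin_one, LinearMap.id_apply]
  have hsq : ‖toEuclideanLin M x‖ ^ 2 ≤ ‖x‖ * ‖y‖ := by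
    rw [← real_inner_self_eq_norm_sq, inner_toEuclideanLin_self, hx]
    exact real_inner_le_norm x y
  have hy : toEuclideanLin (M * (Mᵀ * M)⁻¹) y = toEuclideanLin M x := by
    rw [toLpLin_mul_same, LinearMap.comp_apply]
  rw [hy]
  obtain ht | ht := (norm_nonneg (toEuclideanLin M x)).eq_or_lt
  · rw [← ht, mul_zero]
    exact norm_nonneg y
  · refine le_of_mul_le_mul_right ?_ ht
    calc c * ‖toEuclideanLin M x‖ * ‖toEuclideanLin M x‖
        = c * ‖toEuclideanLin M x‖ ^ 2 := by ring
      _ ≤ c * ‖x‖ * ‖y‖ := by rw [mul_assoc]; gcongr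
      _ ≤ ‖toEuclideanLin M x‖ * ‖y‖ := by gcongr; exact hM x
      _ = ‖y‖ * ‖toEuclideanLin M x‖ := mul_comm _ _

end Euclidean

theorem Matrix.mul_mul_inv_transpose_mul_self_mul_transpose {R m n : Type*} [CommRing R]
    [Fintype m] [Fintype n] [DecidableEq n] (M : Matrix m n R) {D : Matrix n n R}
    (hD : IsUnit D.det) :
    M * D * ((M * D)ᵀ * (M * D))⁻¹ * Dᵀ = M * (Mᵀ * M)⁻¹ := by
  have hDT : IsUnit Dᵀ.det := by rwa [det_transpose]
  have hG : (M * D)ᵀ * (M * D) = Dᵀ * (Mᵀ * M) * D := by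
    simp only [transpose_mul, Matrix.mul_assoc]
  rw [hG, Matrix.mul_inv_rev, Matrix.mul_inv_rev]
  simp only [Matrix.mul_assoc, nonsing_inv_mul _ hDT, mul_nonsing_inv_cancel_left _ _ hD, mul_one]

section OpNorm

variable {n₁ n₂ : ℕ}

theorem norm_toEuclideanLin_le_opNorm (A : Matrix (Fin n₁) (Fin n₂) ℝ)
    (x : EuclideanSpace ℝ (Fin n₂)) : ‖toEuclideanLin A x‖ ≤ opNorm A * ‖x‖ :=
  (LinearMap.toContinuousLinearMap (toEuclideanLin A)).le_opNorm x

theorem opNorm_le_bound {A : Matrix (Fin n₁) (Fin n₂) ℝ} {C : ℝ} (hC : 0 ≤ C)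
    (hA : ∀ x, ‖toEuclideanLin A x‖ ≤ C * ‖x‖) : opNorm A ≤ C :=
  ContinuousLinearMap.opNorm_le_bound _ hC hA

theorem one_sub_opNorm_sub_mul_norm_le {U M : Matrix (Fin n₁) (Fin n₂) ℝ} (hU : Uᵀ * U = 1)
    (x : EuclideanSpace ℝ (Fin n₂)) : (1 - opNorm (M - U)) * ‖x‖ ≤ ‖toEuclideanLin M x‖ := by
  have h := norm_toEuclideanLin_le_opNorm (M - U) x
  rw [map_sub, LinearMap.sub_apply] at h
  have := norm_sub_norm_le (toEuclideanLin U x) (toEuclideanLin M x)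
  rw [norm_toEuclideanLin_of_transpose_mul_self_eq_one hU, norm_sub_rev] at this
  linarith

theorem opNorm_mul_inv_transpose_mul_self_le {M : Matrix (Fin n₁) (Fin n₂) ℝ} {c : ℝ}
    (hc : 0 < c) (hM : ∀ x, c * ‖x‖ ≤ ‖toEuclideanLin M x‖) :
    opNorm (M * (Mᵀ * M)⁻¹) ≤ 1 / c :=
  opNorm_le_bound (by positivity) fun y => by
    rw [div_mul_eq_mul_div, one_mul, le_div_iff₀' hc]
    exact mul_norm_toEuclideanLin_mul_inv_transpose_mul_self_le hc hM y

end OpNorm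

/-- If `L_star = U_star Σ_star^{1/2}` with `U_star` having orthonormal columns and `Σ_star`
positive diagonal, and `‖(L − L_star) Σ_star^{-1/2}‖_op < 1`, then `L` has full column rank
and `‖L (Lᵀ L)⁻¹ Σ_star^{1/2}‖_op ≤ 1/(1 − ‖(L − L_star) Σ_star^{-1/2}‖_op)`. -/
theorem opNorm_scaled_pseudoinverse_bound {n₁ r : ℕ}
    (Ustar : Matrix (Fin n₁) (Fin r) ℝ) (σ : Fin r → ℝ)
    (hU : Ustarᵀ * Ustar = 1) (hσ : ∀ i, 0 < σ i)
    (Lstar L : Matrix (Fin n₁) (Fin r) ℝ)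
    (hLstar : Lstar = Ustar * Matrix.diagonal (fun i => Real.sqrt (σ i)))
    (hΔ : opNorm ((L - Lstar) * Matrix.diagonal (fun i => (Real.sqrt (σ i))⁻¹)) < 1) :
    L.rank = r ∧
    opNorm (L * (Lᵀ * L)⁻¹ * Matrix.diagonal (fun i => Real.sqrt (σ i))) ≤
      1 / (1 - opNorm ((L - Lstar) * Matrix.diagonal (fun i => (Real.sqrt (σ i))⁻¹))) := by
  set D := diagonal fun i => √(σ i)
  set E := diagonal fun i => (√(σ i))⁻¹
  have hED : E * D = 1 := by
    simp [E, D, diagonal_mul_diagonal, (Real.sqrt_pos.2 (hσ _)).ne']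
  have hD : IsUnit D.det := isUnit_det_of_left_inverse hED
  set M := L * E
  have hL : L = M * D := by rw [Matrix.mul_assoc, hED, Matrix.mul_one]
  have hΔM : (L - Lstar) * E = M - Ustar := by
    rw [Matrix.sub_mul, hLstar, Matrix.mul_assoc, mul_eq_one_comm.mp hED, Matrix.mul_one]
  rw [hΔM] at hΔ ⊢
  have hc : 0 < 1 - opNorm (M - Ustar) := sub_pos.mpr hΔ
  have hM := one_sub_opNorm_sub_mul_norm_le (M := M) hU
  constructor
  · rw [hL, rank_mul_eq_left_of_isUnit_det _ _ hD, ← rank_transpose_mul_self,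
      rank_of_isUnit _ (isUnit_transpose_mul_self (injective_mulVec_of_mul_norm_le hc hM)),
      Fintype.card_fin]
  · have hDT : Dᵀ = D := diagonal_transpose _
    rw [← hDT, hL, mul_mul_inv_transpose_mul_self_mul_transpose M hD]
    exact opNorm_mul_inv_transpose_mul_self_le hc hM
end

section
/- Let F = [L; R] with L ∈ R^{n₁×r}, R ∈ R^{n₂×r}, and let F_star = [L_star; R_star] with L_star = U_star·Σ_star^{1/2}, R_star = V_star·Σ_star^{1/2} coming from a compact SVD X_star = U_star·Σ_star·V_star^T of a rank-r matrix. Suppose Q ∈ GL(r) minimizes the function Q ↦ ‖(L·Q − L_star)·Σ_star^{1/2}‖_F² + ‖(R·Q^{-T} − R_star)·Σ_star^{1/2}‖_F² over invertible r×r matrices. Then Q satisfies the first-order optimality condition (L·Q)^T·(L·Q − L_star)·Σ_star = Σ_star·(R·Q^{-T} − R_star)^T·(R·Q^{-T}). -/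
/-!
Perturb the minimiser along `t ↦ Q (1 + t E)`. For a matrix unit `E` one has `E * E = δ • E`,
so `(1 + t E)⁻¹ = 1 - (t / (1 + δ t)) E` and the loss along the curve is
`‖A + t B‖_F² + ‖C - (t / (1 + δ t)) G‖_F²`, whose derivative `2 ⟨A, B⟩ - 2 ⟨C, G⟩` must vanish
at the local minimum `t = 0`. For `E = E_{ji}`, cyclicity of the trace turns `⟨A, B⟩ = ⟨C, G⟩`
into the `(j, i)` entry of the claimed identity, with `Σ_star = D Dᵀ` for the weight
`D = Σ_star^{1/2}`.
-/

open Matrix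

open Filter Topology

section Frobenius

variable {m n : ℕ}

lemma frob_sq (A : Matrix (Fin m) (Fin n) ℝ) : frob A ^ 2 = (Aᵀ * A).trace := by
  rw [frob, Real.sq_sqrt (by positivity), trace, Finset.sum_comm]
  simp [mul_apply, sq]

lemma frob_add_smul_sq (X Y : Matrix (Fin m) (Fin n) ℝ) (t : ℝ) :
    frob (X + t • Y) ^ 2 = frob X ^ 2 + 2 * t * (Xᵀ * Y).trace + t ^ 2 * frob Y ^ 2 := by
  have hsymm : (Yᵀ * X).trace = (Xᵀ * Y).trace := by
    rw [← trace_transpose, transpose_mul, transpose_transpose]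
  simp only [frob_sq, transpose_add, transpose_smul, Matrix.add_mul, Matrix.mul_add,
    Matrix.smul_mul, Matrix.mul_smul, trace_add, trace_smul, hsymm, smul_eq_mul]
  ring

lemma hasDerivAt_frob_add_smul_sq (X Y : Matrix (Fin m) (Fin n) ℝ) {φ : ℝ → ℝ} {φ' : ℝ}
    (hφ : HasDerivAt φ φ' 0) (hφ0 : φ 0 = 0) :
    HasDerivAt (fun t => frob (X + φ t • Y) ^ 2) (2 * φ' * (Xᵀ * Y).trace) 0 := by
  simp only [frob_add_smul_sq]
  refine (((hasDerivAt_const 0 (frob X ^ 2)).add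
    ((hφ.const_mul 2).mul_const (Xᵀ * Y).trace)).add
      ((hφ.pow 2).mul_const (frob Y ^ 2))).congr_deriv ?_
  simp [hφ0]

end Frobenius

section MatrixAlgebra

variable {ι κ K : Type*} [Fintype ι] [Fintype κ]

lemma trace_transpose_mul_mul [CommSemiring K] (X Y : Matrix κ ι K) (D F : Matrix ι ι K) :
    ((X * D)ᵀ * (Y * F * D)).trace = (D * Dᵀ * Xᵀ * Y * F).trace := by
  rw [transpose_mul, show D * Dᵀ * Xᵀ * Y * F = D * (Dᵀ * Xᵀ * Y * F) by
    simp only [Matrix.mul_assoc], trace_mul_comm D]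
  simp only [Matrix.mul_assoc]

variable [DecidableEq ι]

lemma single_mul_single_self [Semiring K] (i j : ι) :
    single i j (1 : K) * single i j 1 = (if j = i then 1 else 0 : K) • single i j 1 := by
  split_ifs with h
  · subst h; simp
  · simp [h]

variable [Field K] {E : Matrix ι ι K} {δ t : K}

lemma one_add_smul_mul_one_sub_smul (hE : E * E = δ • E) (ht : 1 + δ * t ≠ 0) :
    (1 + t • E) * (1 - (t / (1 + δ * t)) • E) = 1 := by
  have : (1 + t • E) * (1 - (t / (1 + δ * t)) • E) =
      1 + (t - t / (1 + δ * t) * (1 + δ * t)) • E := by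
    simp only [Matrix.add_mul, Matrix.mul_sub, Matrix.one_mul, Matrix.mul_one,
      smul_mul_smul_comm, hE, smul_smul]
    module
  rw [this, div_mul_cancel₀ _ ht, sub_self, zero_smul, add_zero]

lemma isUnit_one_add_smul (hE : E * E = δ • E) (ht : 1 + δ * t ≠ 0) : IsUnit (1 + t • E) :=
  .of_mul_eq_one _ (one_add_smul_mul_one_sub_smul hE ht)

lemma inv_one_add_smul (hE : E * E = δ • E) (ht : 1 + δ * t ≠ 0) :
    (1 + t • E)⁻¹ = 1 - (t / (1 + δ * t)) • E :=
  inv_eq_right_inv (one_add_smul_mul_one_sub_smul hE ht)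

end MatrixAlgebra

section Alignment

variable {n₁ n₂ r : ℕ} (L : Matrix (Fin n₁) (Fin r) ℝ) (R : Matrix (Fin n₂) (Fin r) ℝ)
  (Lstar : Matrix (Fin n₁) (Fin r) ℝ) (Rstar : Matrix (Fin n₂) (Fin r) ℝ)
  (D : Matrix (Fin r) (Fin r) ℝ)

noncomputable def alignmentLoss (Q : Matrix (Fin r) (Fin r) ℝ) : ℝ :=
  frob ((L * Q - Lstar) * D) ^ 2 + frob ((R * (Q⁻¹)ᵀ - Rstar) * D) ^ 2

variable {L R Lstar Rstar D} {Q E : Matrix (Fin r) (Fin r) ℝ} {δ : ℝ}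

lemma alignmentLoss_mul_one_add_smul {t : ℝ} (hE : E * E = δ • E) (ht : 1 + δ * t ≠ 0) :
    alignmentLoss L R Lstar Rstar D (Q * (1 + t • E)) =
      frob ((L * Q - Lstar) * D + t • (L * Q * E * D)) ^ 2 +
        frob ((R * (Q⁻¹)ᵀ - Rstar) * D + (-(t / (1 + δ * t))) • (R * (Q⁻¹)ᵀ * Eᵀ * D)) ^ 2 := by
  rw [alignmentLoss, Matrix.mul_inv_rev, inv_one_add_smul hE ht]
  congr 3
  · simp only [Matrix.mul_add, Matrix.mul_one, Matrix.mul_smul, Matrix.add_mul, Matrix.sub_mul,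
      Matrix.smul_mul, Matrix.mul_assoc]
    abel
  · simp only [transpose_mul, transpose_sub, transpose_one, transpose_smul, Matrix.mul_sub,
      Matrix.sub_mul, Matrix.mul_one, Matrix.mul_smul, Matrix.smul_mul, Matrix.mul_assoc, neg_smul]
    abel

theorem trace_eq_of_isMinOn (hQ : IsUnit Q)
    (hmin : IsMinOn (alignmentLoss L R Lstar Rstar D) {Q' | IsUnit Q'} Q)
    (hE : E * E = δ • E) :
    (((L * Q - Lstar) * D)ᵀ * (L * Q * E * D)).trace =
      (((R * (Q⁻¹)ᵀ - Rstar) * D)ᵀ * (R * (Q⁻¹)ᵀ * Eᵀ * D)).trace := by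
  set c : ℝ → ℝ := fun t => t / (1 + δ * t)
  set g : ℝ → ℝ := fun t => frob ((L * Q - Lstar) * D + t • (L * Q * E * D)) ^ 2 +
    frob ((R * (Q⁻¹)ᵀ - Rstar) * D + (-c t) • (R * (Q⁻¹)ᵀ * Eᵀ * D)) ^ 2
  have hc : HasDerivAt c 1 0 := by
    refine ((hasDerivAt_id' 0).div (((hasDerivAt_id' 0).const_mul δ).const_add 1)
      (by simp)).congr_deriv ?_
    simp
  have hg : HasDerivAt g (2 * 1 * (((L * Q - Lstar) * D)ᵀ * (L * Q * E * D)).trace +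
      2 * (-1) * (((R * (Q⁻¹)ᵀ - Rstar) * D)ᵀ * (R * (Q⁻¹)ᵀ * Eᵀ * D)).trace) 0 :=
    (hasDerivAt_frob_add_smul_sq _ _ (hasDerivAt_id' 0) rfl).add
      (hasDerivAt_frob_add_smul_sq _ _ hc.neg (by simp [c]))
  have hne : ∀ᶠ t in 𝓝 (0 : ℝ), 1 + δ * t ≠ 0 :=
    (continuous_const.add (continuous_const.mul continuous_id)).continuousAt.eventually_ne
      (by simp)
  have hloc : IsLocalMin g 0 := by
    filter_upwards [hne] with t ht
    have hg0 : g 0 = alignmentLoss L R Lstar Rstar D Q := by simp [g, c, alignmentLoss]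
    have hle := isMinOn_iff.1 hmin _ (hQ.mul (isUnit_one_add_smul hE ht))
    rwa [alignmentLoss_mul_one_add_smul hE ht, ← hg0] at hle
  linarith [hloc.hasDerivAt_eq_zero hg]

theorem alignment_first_order_of_isMinOn (hQ : IsUnit Q)
    (hmin : IsMinOn (alignmentLoss L R Lstar Rstar D) {Q' | IsUnit Q'} Q) :
    (L * Q)ᵀ * (L * Q - Lstar) * (D * Dᵀ) =
      D * Dᵀ * (R * (Q⁻¹)ᵀ - Rstar)ᵀ * (R * (Q⁻¹)ᵀ) := by
  ext j i
  have h := trace_eq_of_isMinOn hQ hmin (single_mul_single_self j i)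
  rw [trace_transpose_mul_mul, trace_transpose_mul_mul, transpose_single, trace_mul_single,
    trace_mul_single, MulOpposite.op_one, one_smul, one_smul] at h
  calc ((L * Q)ᵀ * (L * Q - Lstar) * (D * Dᵀ)) j i
      = (D * Dᵀ * (L * Q - Lstar)ᵀ * (L * Q))ᵀ j i := by
        simp only [transpose_mul, transpose_transpose, Matrix.mul_assoc]
    _ = _ := h

end Alignment

theorem optimal_alignment_first_order_general {n₁ n₂ r : ℕ}
    (σ : Fin r → ℝ) (hσ : ∀ i, 0 < σ i)
    (Lstar : Matrix (Fin n₁) (Fin r) ℝ) (Rstar : Matrix (Fin n₂) (Fin r) ℝ)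
    (L : Matrix (Fin n₁) (Fin r) ℝ) (R : Matrix (Fin n₂) (Fin r) ℝ)
    (Q : Matrix (Fin r) (Fin r) ℝ) (hQ : IsUnit Q)
    (hmin : ∀ Q' : Matrix (Fin r) (Fin r) ℝ, IsUnit Q' →
      (frob ((L * Q - Lstar) * Matrix.diagonal (fun i => Real.sqrt (σ i)))) ^ 2 +
        (frob ((R * (Q⁻¹)ᵀ - Rstar) * Matrix.diagonal (fun i => Real.sqrt (σ i)))) ^ 2 ≤
      (frob ((L * Q' - Lstar) * Matrix.diagonal (fun i => Real.sqrt (σ i)))) ^ 2 +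
        (frob ((R * (Q'⁻¹)ᵀ - Rstar) * Matrix.diagonal (fun i => Real.sqrt (σ i)))) ^ 2) :
    (L * Q)ᵀ * (L * Q - Lstar) * Matrix.diagonal σ =
      Matrix.diagonal σ * (R * (Q⁻¹)ᵀ - Rstar)ᵀ * (R * (Q⁻¹)ᵀ) := by
  have hDDt : diagonal (fun i => √(σ i)) * (diagonal fun i => √(σ i))ᵀ = diagonal σ := by
    rw [diagonal_transpose, diagonal_mul_diagonal]
    exact congrArg diagonal (funext fun i => Real.mul_self_sqrt (hσ i).le)
  rw [← hDDt]
  exact alignment_first_order_of_isMinOn hQ (isMinOn_iff.2 hmin)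

/-- First-order optimality condition for the optimal alignment matrix: if the invertible
matrix `Q` minimizes `‖(LQ − L_star)Σ_star^{1/2}‖_F² + ‖(RQ^{-T} − R_star)Σ_star^{1/2}‖_F²`
over invertible matrices, then
`(LQ)ᵀ (LQ − L_star) Σ_star = Σ_star (RQ^{-T} − R_star)ᵀ (RQ^{-T})`. -/
theorem optimal_alignment_first_order {n₁ n₂ r : ℕ}
    (Ustar : Matrix (Fin n₁) (Fin r) ℝ) (Vstar : Matrix (Fin n₂) (Fin r) ℝ)
    (σ : Fin r → ℝ) (hU : Ustarᵀ * Ustar = 1) (hV : Vstarᵀ * Vstar = 1)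
    (hσ : ∀ i, 0 < σ i)
    (Lstar : Matrix (Fin n₁) (Fin r) ℝ) (Rstar : Matrix (Fin n₂) (Fin r) ℝ)
    (hLstar : Lstar = Ustar * Matrix.diagonal (fun i => Real.sqrt (σ i)))
    (hRstar : Rstar = Vstar * Matrix.diagonal (fun i => Real.sqrt (σ i)))
    (L : Matrix (Fin n₁) (Fin r) ℝ) (R : Matrix (Fin n₂) (Fin r) ℝ)
    (Q : Matrix (Fin r) (Fin r) ℝ) (hQ : IsUnit Q)
    (hmin : ∀ Q' : Matrix (Fin r) (Fin r) ℝ, IsUnit Q' →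
      (frob ((L * Q - Lstar) * Matrix.diagonal (fun i => Real.sqrt (σ i)))) ^ 2 +
        (frob ((R * (Q⁻¹)ᵀ - Rstar) * Matrix.diagonal (fun i => Real.sqrt (σ i)))) ^ 2 ≤
      (frob ((L * Q' - Lstar) * Matrix.diagonal (fun i => Real.sqrt (σ i)))) ^ 2 +
        (frob ((R * (Q'⁻¹)ᵀ - Rstar) * Matrix.diagonal (fun i => Real.sqrt (σ i)))) ^ 2) :
    (L * Q)ᵀ * (L * Q - Lstar) * Matrix.diagonal σ =
      Matrix.diagonal σ * (R * (Q⁻¹)ᵀ - Rstar)ᵀ * (R * (Q⁻¹)ᵀ) :=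
  optimal_alignment_first_order_general σ hσ Lstar Rstar L R Q hQ hmin
end

section
/- Let X_star ∈ R^{n₁×n₂} have rank r with compact SVD X_star = U_star·Σ_star·V_star^T, let L_star = U_star·Σ_star^{1/2}, R_star = V_star·Σ_star^{1/2}. Let F = [L; R] and suppose dist(F, F_star) := inf_{Q ∈ GL(r)} sqrt(‖(LQ − L_star)Σ_star^{1/2}‖_F² + ‖(RQ^{-T} − R_star)Σ_star^{1/2}‖_F²) < σ_r(X_star), where σ_r(X_star) is the smallest nonzero singular value. Then the infimum is attained at some invertible matrix Q ∈ GL(r). -/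
open Matrix

/-- The scaled distance `dist(F, F_star)`: the infimum over invertible `Q` of
`sqrt(‖(LQ − L_star)Σ_star^{1/2}‖_F² + ‖(RQ^{-T} − R_star)Σ_star^{1/2}‖_F²)`,
where `Σ_star = diagonal σ`. -/
noncomputable def distF {n₁ n₂ r : ℕ}
    (L : Matrix (Fin n₁) (Fin r) ℝ) (R : Matrix (Fin n₂) (Fin r) ℝ)
    (Lstar : Matrix (Fin n₁) (Fin r) ℝ) (Rstar : Matrix (Fin n₂) (Fin r) ℝ)
    (σ : Fin r → ℝ) : ℝ :=
  sInf {c : ℝ | ∃ Q : Matrix (Fin r) (Fin r) ℝ, IsUnit Q ∧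
    c = Real.sqrt
      ((frob ((L * Q - Lstar) * Matrix.diagonal (fun i => Real.sqrt (σ i)))) ^ 2 +
       (frob ((R * (Q⁻¹)ᵀ - Rstar) * Matrix.diagonal (fun i => Real.sqrt (σ i)))) ^ 2)}

/-!
If the cost of some invertible `Q` is below `σ_r`, then `L Q Σ^{1/2}` is within Frobenius distance
`d < σ_r` of `U Σ`, whose columns are orthogonal of length at least `σ_r`; hence `L Q Σ^{1/2}` is
bounded below by `σ_r - d`, and since it maps `Σ^{-1/2} Q⁻¹` to `L`, the inverse `Q⁻¹` is
bounded. Symmetrically, the `R` term bounds `Qᵀ`. So the costs below `σ_r` are taken on a bounded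
part of the closed set `{(Q, Q') | Q Q' = 1}`, and the extreme value theorem gives a minimiser.
-/

open scoped Matrix.Norms.Frobenius

namespace Matrix

variable {k m n : Type*} [Fintype k] [Fintype m] [Fintype n]

theorem frobenius_norm_sq_eq_sum (A : Matrix m n ℝ) : ‖A‖ ^ 2 = ∑ i, ∑ j, A i j ^ 2 := by
  rw [frobenius_norm_def, ← Real.sqrt_eq_rpow, Real.sq_sqrt (by positivity)]
  simp

theorem frobenius_norm_sq_eq_trace (A : Matrix m n ℝ) : ‖A‖ ^ 2 = trace (Aᵀ * A) := by
  rw [frobenius_norm_sq_eq_sum, Finset.sum_comm]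
  simp [trace, mul_apply, sq]

theorem frobenius_norm_mul_of_transpose_mul_self_eq_one [DecidableEq k] {W : Matrix m k ℝ}
    (hW : Wᵀ * W = 1) (Y : Matrix k n ℝ) : ‖W * Y‖ = ‖Y‖ := by
  refine (pow_left_inj₀ (norm_nonneg _) (norm_nonneg _) two_ne_zero).mp ?_
  rw [frobenius_norm_sq_eq_trace, frobenius_norm_sq_eq_trace, transpose_mul, Matrix.mul_assoc,
    ← Matrix.mul_assoc Wᵀ, hW, Matrix.one_mul]

theorem mul_norm_le_frobenius_norm_diagonal_mul [DecidableEq m] {σ : m → ℝ} {s : ℝ}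
    (hs : 0 ≤ s) (hσ : ∀ i, s ≤ σ i) (Y : Matrix m n ℝ) : s * ‖Y‖ ≤ ‖diagonal σ * Y‖ := by
  refine (pow_le_pow_iff_left₀ (by positivity) (norm_nonneg _) two_ne_zero).mp ?_
  rw [mul_pow, frobenius_norm_sq_eq_sum, frobenius_norm_sq_eq_sum, Finset.mul_sum]
  gcongr with i _
  rw [Finset.mul_sum]
  gcongr with j _
  rw [diagonal_mul, mul_pow]
  gcongr
  exact hσ i

theorem sub_mul_norm_le_frobenius_norm_mul [DecidableEq k] {W : Matrix m k ℝ} (hW : Wᵀ * W = 1)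
    {σ : k → ℝ} {s : ℝ} (hs : 0 ≤ s) (hσ : ∀ i, s ≤ σ i) (B : Matrix m k ℝ) (Y : Matrix k n ℝ) :
    (s - ‖B - W * diagonal σ‖) * ‖Y‖ ≤ ‖B * Y‖ := by
  have hnear : ‖(W * diagonal σ - B) * Y‖ ≤ ‖B - W * diagonal σ‖ * ‖Y‖ := by
    rw [← norm_neg (B - _), neg_sub]
    exact frobenius_norm_mul _ _
  calc (s - ‖B - W * diagonal σ‖) * ‖Y‖
      ≤ ‖diagonal σ * Y‖ - ‖B - W * diagonal σ‖ * ‖Y‖ := by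
        rw [sub_mul]
        gcongr
        exact mul_norm_le_frobenius_norm_diagonal_mul hs hσ Y
    _ = ‖B * Y + (W * diagonal σ - B) * Y‖ - ‖B - W * diagonal σ‖ * ‖Y‖ := by
        rw [← Matrix.add_mul, add_sub_cancel, Matrix.mul_assoc,
          frobenius_norm_mul_of_transpose_mul_self_eq_one hW]
    _ ≤ ‖B * Y‖ := by linarith [norm_add_le (B * Y) ((W * diagonal σ - B) * Y)]

theorem frobenius_norm_right_inverse_le [DecidableEq k] {W : Matrix m k ℝ} (hW : Wᵀ * W = 1)
    {τ : k → ℝ} {s d : ℝ} (hτ : ∀ i, s ≤ τ i ^ 2) (hds : d < s) (L : Matrix m k ℝ)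
    {Q Q' : Matrix k k ℝ} (hQ : Q * Q' = 1)
    (hLQ : ‖(L * Q - W * diagonal τ) * diagonal τ‖ ≤ d) :
    ‖Q'‖ ≤ ‖diagonal τ‖ * ‖L‖ / (s - d) := by
  have hd : 0 ≤ d := (norm_nonneg _).trans hLQ
  have hτ0 : ∀ i, τ i ≠ 0 := fun i hi => by linarith [hτ i, show τ i ^ 2 = 0 by simp [hi]]
  have hDE : diagonal τ * diagonal τ⁻¹ = 1 := by
    rw [diagonal_mul_diagonal, ← diagonal_one]
    exact congrArg diagonal (funext fun i => mul_inv_cancel₀ (hτ0 i))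
  have hsq : ∀ i, s ≤ (τ * τ) i := fun i => by simpa [sq] using hτ i
  have hlow : (s - d) * ‖diagonal τ⁻¹ * Q'‖ ≤ ‖L‖ :=
    calc (s - d) * ‖diagonal τ⁻¹ * Q'‖
        ≤ (s - ‖L * Q * diagonal τ - W * diagonal (τ * τ)‖) * ‖diagonal τ⁻¹ * Q'‖ := by
          gcongr
          have hWD : W * diagonal (τ * τ) = W * diagonal τ * diagonal τ := by
            rw [Matrix.mul_assoc, diagonal_mul_diagonal]; rfl
          rwa [hWD, ← Matrix.sub_mul]
      _ ≤ ‖L * Q * diagonal τ * (diagonal τ⁻¹ * Q')‖ :=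
          sub_mul_norm_le_frobenius_norm_mul hW (by linarith) hsq _ _
      _ = ‖L‖ := by
          rw [← Matrix.mul_assoc, Matrix.mul_assoc (L * Q), hDE, Matrix.mul_one,
            Matrix.mul_assoc, hQ, Matrix.mul_one]
  calc ‖Q'‖ = ‖diagonal τ * (diagonal τ⁻¹ * Q')‖ := by rw [← Matrix.mul_assoc, hDE, Matrix.one_mul]
    _ ≤ ‖diagonal τ‖ * ‖diagonal τ⁻¹ * Q'‖ := frobenius_norm_mul _ _
    _ ≤ ‖diagonal τ‖ * (‖L‖ / (s - d)) := by
        gcongr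
        rw [le_div_iff₀ (by linarith), mul_comm]
        exact hlow
    _ = ‖diagonal τ‖ * ‖L‖ / (s - d) := (mul_div_assoc _ _ _).symm

end Matrix

theorem frob_eq_norm {m n : ℕ} (A : Matrix (Fin m) (Fin n) ℝ) : frob A = ‖A‖ := by
  rw [frob, ← frobenius_norm_sq_eq_sum, Real.sqrt_sq (norm_nonneg _)]

open Bornology Filter

theorem exists_isMinOn_of_isBounded_sublevel {X : Type*} [PseudoMetricSpace X] [ProperSpace X]
    {g : X → ℝ} (hg : Continuous g) {S : Set X} (hS : IsClosed S) {x₀ : X} (hx₀ : x₀ ∈ S)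
    (hbdd : IsBounded {x ∈ S | g x ≤ g x₀}) : ∃ x ∈ S, IsMinOn g S x := by
  refine hg.continuousOn.exists_isMinOn' hS hx₀ ?_
  rw [eventually_inf_principal]
  filter_upwards [hbdd.isCompact_closure.compl_mem_cocompact] with x hxK hxS
  by_contra! hlt
  exact hxK (subset_closure ⟨hxS, hlt.le⟩)

/-- Freeing `Q⁻¹` into a second variable makes the cost of `distF` continuous; `distF` is its
infimum over the closed set `{P | P.1 * P.2 = 1}`. -/
noncomputable def pairCost {n₁ n₂ r : ℕ}
    (L : Matrix (Fin n₁) (Fin r) ℝ) (R : Matrix (Fin n₂) (Fin r) ℝ)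
    (Lstar : Matrix (Fin n₁) (Fin r) ℝ) (Rstar : Matrix (Fin n₂) (Fin r) ℝ) (τ : Fin r → ℝ)
    (P : Matrix (Fin r) (Fin r) ℝ × Matrix (Fin r) (Fin r) ℝ) : ℝ :=
  Real.sqrt (frob ((L * P.1 - Lstar) * diagonal τ) ^ 2 + frob ((R * P.2ᵀ - Rstar) * diagonal τ) ^ 2)

section pairCost

variable {n₁ n₂ r : ℕ} (L : Matrix (Fin n₁) (Fin r) ℝ) (R : Matrix (Fin n₂) (Fin r) ℝ)
  (Lstar : Matrix (Fin n₁) (Fin r) ℝ) (Rstar : Matrix (Fin n₂) (Fin r) ℝ) (τ : Fin r → ℝ)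

theorem continuous_pairCost : Continuous (pairCost L R Lstar Rstar τ) := by
  unfold pairCost
  simp_rw [frob_eq_norm]
  fun_prop

theorem distF_eq_sInf_pairCost (σ : Fin r → ℝ) :
    distF L R Lstar Rstar σ =
      sInf (pairCost L R Lstar Rstar (fun i => Real.sqrt (σ i)) '' {P | P.1 * P.2 = 1}) := by
  refine congrArg sInf (Set.ext fun c => ⟨?_, ?_⟩)
  · rintro ⟨Q, hQ, rfl⟩
    exact ⟨(Q, Q⁻¹), mul_nonsing_inv Q ((isUnit_iff_isUnit_det Q).mp hQ), rfl⟩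
  · rintro ⟨P, hP, rfl⟩
    refine ⟨P.1, IsUnit.of_mul_eq_one _ hP, ?_⟩
    rw [inv_eq_right_inv hP]
    rfl

theorem isBounded_pairCost_sublevel {Ustar : Matrix (Fin n₁) (Fin r) ℝ}
    {Vstar : Matrix (Fin n₂) (Fin r) ℝ} (hU : Ustarᵀ * Ustar = 1) (hV : Vstarᵀ * Vstar = 1)
    {s d : ℝ} (hτ : ∀ i, s ≤ τ i ^ 2) (hds : d < s) :
    IsBounded {P | P.1 * P.2 = 1 ∧
      pairCost L R (Ustar * diagonal τ) (Vstar * diagonal τ) τ P ≤ d} := by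
  refine ((Metric.isBounded_closedBall (x := 0) (r := ‖diagonal τ‖ * ‖R‖ / (s - d))).prod
    (Metric.isBounded_closedBall (x := 0) (r := ‖diagonal τ‖ * ‖L‖ / (s - d)))).subset ?_
  rintro P ⟨hP, hcost⟩
  rw [pairCost, frob_eq_norm, frob_eq_norm] at hcost
  have hL : ‖(L * P.1 - Ustar * diagonal τ) * diagonal τ‖ ≤ d :=
    (Real.le_sqrt_of_sq_le (le_add_of_nonneg_right (sq_nonneg _))).trans hcost
  have hR : ‖(R * P.2ᵀ - Vstar * diagonal τ) * diagonal τ‖ ≤ d :=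
    (Real.le_sqrt_of_sq_le (le_add_of_nonneg_left (sq_nonneg _))).trans hcost
  have hPT : P.2ᵀ * P.1ᵀ = 1 := by rw [← transpose_mul, hP, transpose_one]
  refine ⟨?_, ?_⟩ <;> rw [Metric.mem_closedBall, dist_zero_right]
  · rw [← frobenius_norm_transpose]
    exact frobenius_norm_right_inverse_le hV hτ hds R hPT hR
  · exact frobenius_norm_right_inverse_le hU hτ hds L hP hL

end pairCost

theorem distF_attained_general {n₁ n₂ r : ℕ} (hr : 0 < r)
    (Ustar : Matrix (Fin n₁) (Fin r) ℝ) (Vstar : Matrix (Fin n₂) (Fin r) ℝ)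
    (σ : Fin r → ℝ) (hU : Ustarᵀ * Ustar = 1) (hV : Vstarᵀ * Vstar = 1)
    (hσ : ∀ i, 0 < σ i) (hsort : Antitone σ)
    (Lstar : Matrix (Fin n₁) (Fin r) ℝ) (Rstar : Matrix (Fin n₂) (Fin r) ℝ)
    (hLstar : Lstar = Ustar * Matrix.diagonal (fun i => Real.sqrt (σ i)))
    (hRstar : Rstar = Vstar * Matrix.diagonal (fun i => Real.sqrt (σ i)))
    (L : Matrix (Fin n₁) (Fin r) ℝ) (R : Matrix (Fin n₂) (Fin r) ℝ)
    (hdist : distF L R Lstar Rstar σ < σ ⟨r - 1, Nat.sub_lt hr one_pos⟩) :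
    ∃ Q : Matrix (Fin r) (Fin r) ℝ, IsUnit Q ∧
      distF L R Lstar Rstar σ = Real.sqrt
        ((frob ((L * Q - Lstar) * Matrix.diagonal (fun i => Real.sqrt (σ i)))) ^ 2 +
         (frob ((R * (Q⁻¹)ᵀ - Rstar) * Matrix.diagonal (fun i => Real.sqrt (σ i)))) ^ 2) := by
  rw [distF_eq_sInf_pairCost] at hdist ⊢
  set S : Set (Matrix (Fin r) (Fin r) ℝ × Matrix (Fin r) (Fin r) ℝ) := {P | P.1 * P.2 = 1}
  set g := pairCost L R Lstar Rstar (fun i => Real.sqrt (σ i))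
  obtain ⟨_, ⟨P₀, hP₀S, rfl⟩, hP₀⟩ :=
    exists_lt_of_csInf_lt ((show S.Nonempty from ⟨(1, 1), mul_one 1⟩).image g) hdist
  have hτ : ∀ i, σ ⟨r - 1, Nat.sub_lt hr one_pos⟩ ≤ Real.sqrt (σ i) ^ 2 := fun i => by
    rw [Real.sq_sqrt (hσ i).le]
    exact hsort (Fin.le_def.mpr (Nat.le_sub_one_of_lt i.isLt))
  have hbdd : IsBounded {P ∈ S | g P ≤ g P₀} := by
    subst hLstar hRstar
    exact isBounded_pairCost_sublevel L R _ hU hV hτ hP₀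
  obtain ⟨P, hPS, hmin⟩ := exists_isMinOn_of_isBounded_sublevel (continuous_pairCost ..)
    (isClosed_eq (by fun_prop) continuous_const) hP₀S hbdd
  refine ⟨P.1, IsUnit.of_mul_eq_one _ hPS, ?_⟩
  rw [IsLeast.csInf_eq ⟨Set.mem_image_of_mem g hPS, Set.forall_mem_image.2 hmin⟩,
    inv_eq_right_inv hPS]
  rfl

/-- If `dist(F, F_star) < σ_r(X_star)`, then the infimum defining `dist(F, F_star)` is
attained at some invertible matrix `Q`. -/
theorem distF_attained {n₁ n₂ r : ℕ} (hr : 0 < r)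
    (Xstar : Matrix (Fin n₁) (Fin n₂) ℝ)
    (Ustar : Matrix (Fin n₁) (Fin r) ℝ) (Vstar : Matrix (Fin n₂) (Fin r) ℝ)
    (σ : Fin r → ℝ) (hU : Ustarᵀ * Ustar = 1) (hV : Vstarᵀ * Vstar = 1)
    (hσ : ∀ i, 0 < σ i) (hsort : Antitone σ)
    (hX : Xstar = Ustar * Matrix.diagonal σ * Vstarᵀ)
    (Lstar : Matrix (Fin n₁) (Fin r) ℝ) (Rstar : Matrix (Fin n₂) (Fin r) ℝ)
    (hLstar : Lstar = Ustar * Matrix.diagonal (fun i => Real.sqrt (σ i)))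
    (hRstar : Rstar = Vstar * Matrix.diagonal (fun i => Real.sqrt (σ i)))
    (L : Matrix (Fin n₁) (Fin r) ℝ) (R : Matrix (Fin n₂) (Fin r) ℝ)
    (hdist : distF L R Lstar Rstar σ < σ ⟨r - 1, Nat.sub_lt hr one_pos⟩) :
    ∃ Q : Matrix (Fin r) (Fin r) ℝ, IsUnit Q ∧
      distF L R Lstar Rstar σ = Real.sqrt
        ((frob ((L * Q - Lstar) * Matrix.diagonal (fun i => Real.sqrt (σ i)))) ^ 2 +
         (frob ((R * (Q⁻¹)ᵀ - Rstar) * Matrix.diagonal (fun i => Real.sqrt (σ i)))) ^ 2) :=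
  distF_attained_general hr Ustar Vstar σ hU hV hσ hsort Lstar Rstar hLstar hRstar L R hdist
end

section
/- Let S_star ∈ R^{n₁×n₂} have at most α·n₂ nonzero entries per row and at most α·n₁ nonzero entries per column. Given any matrix D ∈ R^{n₁×n₂}, let S = T_{2α}[S_star + D] be the matrix obtained by keeping, in each entry position (i,j), the value (S_star+D)_{i,j} if and only if |S_star+D|_{i,j} is simultaneously among the top 2α·n₂ largest magnitudes in its row and the top 2α·n₁ largest magnitudes in its column (setting it to 0 otherwise). Then ‖S − S_star‖_∞ ≤ 2‖D‖_∞. -/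
open Matrix

/-- The largest absolute value of an entry of a matrix. -/
noncomputable def entrywiseSup {n₁ n₂ : ℕ} (A : Matrix (Fin n₁) (Fin n₂) ℝ) : ℝ :=
  ⨆ i, ⨆ j, |A i j|

/-- The `k`-th largest element in magnitude of a finite family of reals
(with the convention that it is `0` when out of range). -/
noncomputable def kthLargestAbs {n : ℕ} (v : Fin n → ℝ) (k : ℕ) : ℝ :=
  (((List.ofFn v).map (fun x => |x|)).insertionSort (· ≥ ·)).getD (k - 1) 0

/-!
An entry of `Sstar` that survives thresholding is changed by at most `‖D‖_∞`. An entry that is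
discarded falls below the `k`-th largest magnitude of its row (or column), where `k` exceeds the
number of nonzero entries of `Sstar` there. By pigeonhole some entry off the support of `Sstar`
reaches that threshold, and such an entry is an entry of `D`; so the threshold is at most
`‖D‖_∞`, and the discarded entry of `Sstar` is at most `2 ‖D‖_∞` in magnitude.
-/

theorem List.Pairwise.add_one_le_countP_getElem_le {α : Type*} [LinearOrder α] {L : List α}
    (hL : L.Pairwise (· ≥ ·)) {i : ℕ} (hi : i < L.length) :
    i + 1 ≤ L.countP (fun x => L[i] ≤ x) := by
  have hprefix : ∀ x ∈ L.take (i + 1), L[i] ≤ x := by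
    intro x hx
    obtain ⟨m, hm, rfl⟩ := List.mem_iff_getElem.1 hx
    rw [List.length_take] at hm
    rw [List.getElem_take]
    exact hL.rel_get_of_le (a := ⟨m, by omega⟩) (b := ⟨i, hi⟩) (Fin.mk_le_mk.2 (by omega))
  have hcount := (L.take_sublist (i + 1)).countP_le (p := fun x => L[i] ≤ x)
  rw [List.countP_eq_length.2 fun x hx => decide_eq_true (hprefix x hx), List.length_take]
    at hcount
  omega

theorem Finset.card_filter_univ_fin_eq_countP_ofFn {α : Type*} {n : ℕ} (v : Fin n → α)
    (p : α → Prop) [DecidablePred p] :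
    (Finset.univ.filter (fun j => p (v j))).card = (List.ofFn v).countP (fun x => p x) := by
  rw [Fin.univ_def, List.ofFn_eq_map, List.countP_map]
  simp only [Finset.card, Finset.filter, Multiset.filter_coe, Multiset.coe_card,
    List.countP_eq_length_filter]
  rfl

theorem kthLargestAbs_eq_zero_of_lt {n : ℕ} (v : Fin n → ℝ) {k : ℕ} (hk : n < k) :
    kthLargestAbs v k = 0 :=
  List.getD_eq_default _ _ <| by
    simp only [List.length_insertionSort, List.length_map, List.length_ofFn]; omega

theorem le_card_filter_kthLargestAbs_le {n : ℕ} (v : Fin n → ℝ) {k : ℕ} (hk : 1 ≤ k)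
    (hkn : k ≤ n) : k ≤ (Finset.univ.filter (fun j => kthLargestAbs v k ≤ |v j|)).card := by
  set L := ((List.ofFn v).map (fun x => |x|)).insertionSort (· ≥ ·)
  have hi : k - 1 < L.length := by
    simp only [L, List.length_insertionSort, List.length_map, List.length_ofFn]; omega
  have hkth : kthLargestAbs v k = L[k - 1] := List.getD_eq_getElem L 0 hi
  have hsorted : L.Pairwise (· ≥ ·) := List.pairwise_insertionSort _ _
  rw [Finset.card_filter_univ_fin_eq_countP_ofFn v (fun x => kthLargestAbs v k ≤ |x|), hkth]
  calc k = k - 1 + 1 := by omega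
    _ ≤ L.countP (fun x => L[k - 1] ≤ x) := hsorted.add_one_le_countP_getElem_le hi
    _ = _ := by rw [(List.perm_insertionSort _ _).countP_eq, List.countP_map]; rfl

theorem kthLargestAbs_add_le {n : ℕ} {s d : Fin n → ℝ} {E : ℝ} (hd : ∀ j, |d j| ≤ E)
    (hE : 0 ≤ E) {k : ℕ} (hk : (Finset.univ.filter (fun j => s j ≠ 0)).card < k) :
    kthLargestAbs (s + d) k ≤ E := by
  rcases le_or_gt k n with hkn | hnk
  · obtain ⟨j, hj_large, hj_off⟩ := Finset.exists_mem_notMem_of_card_lt_card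
      (hk.trans_le (le_card_filter_kthLargestAbs_le (s + d) (by omega) hkn))
    simp only [Finset.mem_filter, Finset.mem_univ, true_and, not_not] at hj_large hj_off
    calc kthLargestAbs (s + d) k ≤ |s j + d j| := hj_large
      _ = |d j| := by rw [hj_off, zero_add]
      _ ≤ E := hd j
  · exact (kthLargestAbs_eq_zero_of_lt _ hnk).trans_le hE

theorem abs_le_two_mul_of_abs_add_lt_kthLargestAbs {n : ℕ} {s d : Fin n → ℝ} {E : ℝ}
    (hd : ∀ j, |d j| ≤ E) (hE : 0 ≤ E) {k : ℕ}
    (hk : (Finset.univ.filter (fun j => s j ≠ 0)).card < k) {j : Fin n}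
    (hj : |s j + d j| < kthLargestAbs (s + d) k) : |s j| ≤ 2 * E :=
  calc |s j| ≤ |s j + d j| + |d j| := by simpa using abs_sub_le (s j + d j) 0 (d j)
    _ ≤ E + E := add_le_add (hj.le.trans (kthLargestAbs_add_le hd hE hk)) (hd j)
    _ = 2 * E := (two_mul E).symm

theorem Nat.lt_ceil_two_mul_of_le {r : ℕ} {x : ℝ} (hr : 0 < r) (hrx : (r : ℝ) ≤ x) :
    r < ⌈2 * x⌉₊ := by
  have : (0 : ℝ) < r := by exact_mod_cast hr
  exact Nat.lt_ceil.2 (by linarith)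

theorem abs_le_entrywiseSup {m n : ℕ} (A : Matrix (Fin m) (Fin n) ℝ) (i : Fin m) (j : Fin n) :
    |A i j| ≤ entrywiseSup A :=
  (le_ciSup (Set.finite_range _).bddAbove j).trans
    (le_ciSup (f := fun i => ⨆ j, |A i j|) (Set.finite_range _).bddAbove i)

theorem entrywiseSup_nonneg {m n : ℕ} (A : Matrix (Fin m) (Fin n) ℝ) : 0 ≤ entrywiseSup A :=
  Real.iSup_nonneg fun _ => Real.iSup_nonneg fun _ => abs_nonneg _

theorem entrywiseSup_le {m n : ℕ} {A : Matrix (Fin m) (Fin n) ℝ} {c : ℝ}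
    (h : ∀ i j, |A i j| ≤ c) (hc : 0 ≤ c) : entrywiseSup A ≤ c :=
  Real.iSup_le (fun i => Real.iSup_le (h i) hc) hc

theorem hard_thresholding_entrywise_bound_general {n₁ n₂ : ℕ} (α : ℝ)
    (Sstar D S M : Matrix (Fin n₁) (Fin n₂) ℝ)
    (hM : M = Sstar + D)
    (hrow : ∀ i, ((Finset.univ.filter (fun j => Sstar i j ≠ 0)).card : ℝ) ≤ α * n₂)
    (hcol : ∀ j, ((Finset.univ.filter (fun i => Sstar i j ≠ 0)).card : ℝ) ≤ α * n₁)
    (hS : ∀ i j, S i j =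
      if |M i j| ≥ kthLargestAbs (fun j' => M i j') ⌈2 * α * n₂⌉₊ ∧
         |M i j| ≥ kthLargestAbs (fun i' => M i' j) ⌈2 * α * n₁⌉₊
      then M i j else 0) :
    entrywiseSup (S - Sstar) ≤ 2 * entrywiseSup D := by
  subst hM
  have hD := abs_le_entrywiseSup D
  have hE := entrywiseSup_nonneg D
  refine entrywiseSup_le (fun i j => ?_) (by positivity)
  rw [Matrix.sub_apply, hS]
  split_ifs with hkept
  · rw [Matrix.add_apply, add_sub_cancel_left]
    linarith [hD i j]
  rw [zero_sub, abs_neg]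
  by_cases hzero : Sstar i j = 0
  · rw [hzero, abs_zero]; positivity
  rcases not_and_or.mp hkept with hrow_drop | hcol_drop
  · refine abs_le_two_mul_of_abs_add_lt_kthLargestAbs (s := Sstar i) (d := D i) (hD i) hE ?_
      (not_le.mp hrow_drop)
    rw [mul_assoc]
    exact Nat.lt_ceil_two_mul_of_le (Finset.card_pos.2 ⟨j, by simpa⟩) (hrow i)
  · refine abs_le_two_mul_of_abs_add_lt_kthLargestAbs (s := fun i' => Sstar i' j)
      (d := fun i' => D i' j) (fun i' => hD i' j) hE ?_ (not_le.mp hcol_drop)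
    rw [mul_assoc]
    exact Nat.lt_ceil_two_mul_of_le (Finset.card_pos.2 ⟨i, by simpa⟩) (hcol j)

/-- If `S_star` has at most `α n₂` (resp. `α n₁`) nonzero entries per row (resp. column),
and `S = T_{2α}[S_star + D]` keeps an entry of `S_star + D` iff its magnitude is among the
top `2α n₂` in its row and the top `2α n₁` in its column, then
`‖S − S_star‖_∞ ≤ 2 ‖D‖_∞`. -/
theorem hard_thresholding_entrywise_bound {n₁ n₂ : ℕ} (α : ℝ) (hα0 : 0 ≤ α)
    (Sstar D S M : Matrix (Fin n₁) (Fin n₂) ℝ)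
    (hM : M = Sstar + D)
    (hrow : ∀ i, ((Finset.univ.filter (fun j => Sstar i j ≠ 0)).card : ℝ) ≤ α * n₂)
    (hcol : ∀ j, ((Finset.univ.filter (fun i => Sstar i j ≠ 0)).card : ℝ) ≤ α * n₁)
    (hS : ∀ i j, S i j =
      if |M i j| ≥ kthLargestAbs (fun j' => M i j') ⌈2 * α * n₂⌉₊ ∧
         |M i j| ≥ kthLargestAbs (fun i' => M i' j) ⌈2 * α * n₁⌉₊
      then M i j else 0) :
    entrywiseSup (S - Sstar) ≤ 2 * entrywiseSup D :=
  hard_thresholding_entrywise_bound_general α Sstar D S M hM hrow hcol hS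
end
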